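/- arXiv:2410.00191 — 8 statements merged into one kernel-verified Lean document; each statement's English description precedes it below -/
import Mathlib

section
/- Let d ≥ 2 be an integer and let α ∈ (1,2) be real. Define Ψ(β) = (2^α/(β−α)) · Γ(β/2) · Γ((d−β+α)/2) / ( Γ((d−β)/2) · Γ((β−α)/2) ) for β ∈ ((d+α)/2, d+α), where Γ denotes the real Gamma function. Then Ψ is strictly decreasing on the open interval ((d+α)/2, d+α); that is, for all β₁, β₂ in this interval with β₁ < β₂ one has Ψ(β₂) < Ψ(β₁). -/
open Real

/-- The coupling constant function `Ψ` from the paper, defined for `α ∈ (1,2)` by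
`Ψ(β) = (2^α/(β−α)) · Γ(β/2) · Γ((d−β+α)/2) / (Γ((d−β)/2) · Γ((β−α)/2))`. -/
noncomputable def Psi (d : ℕ) (α β : ℝ) : ℝ :=
  (2 : ℝ) ^ α / (β - α) *
    (Real.Gamma (β / 2) * Real.Gamma ((d - β + α) / 2) /
      (Real.Gamma ((d - β) / 2) * Real.Gamma ((β - α) / 2)))

open Filter in
private lemma gamma_four_lt (a₁ a₂ a₃ a₄ p₁ p₂ p₃ p₄ : ℝ)
    (ha₁ : 0 < a₁) (ha₂ : 0 < a₂) (ha₃ : 0 < a₃) (ha₄ : 0 < a₄)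
    (hp₁ : 0 < p₁) (hp₂ : 0 < p₂) (hp₃ : 0 < p₃) (hp₄ : 0 < p₄)
    (hsum : a₁ + a₂ + a₃ + a₄ = p₁ + p₂ + p₃ + p₄)
    (hj : ∀ u : ℝ, 0 ≤ u →
      (a₁+u)*(a₂+u)*(a₃+u)*(a₄+u) ≤ (p₁+u)*(p₂+u)*(p₃+u)*(p₄+u))
    (h0 : a₁*a₂*a₃*a₄ < p₁*p₂*p₃*p₄) :
    Real.Gamma p₁ * Real.Gamma p₂ * Real.Gamma p₃ * Real.Gamma p₄ <
      Real.Gamma a₁ * Real.Gamma a₂ * Real.Gamma a₃ * Real.Gamma a₄ := by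
  have hapos : 0 < a₁*a₂*a₃*a₄ := by positivity
  set K : ℝ := (p₁*p₂*p₃*p₄)/(a₁*a₂*a₃*a₄) with hKdef
  have hK1 : 1 < K := (one_lt_div hapos).2 h0
  have claim : ∀ n : ℕ, 1 ≤ n →
      K * (Real.GammaSeq p₁ n * Real.GammaSeq p₂ n * Real.GammaSeq p₃ n * Real.GammaSeq p₄ n) ≤
        Real.GammaSeq a₁ n * Real.GammaSeq a₂ n * Real.GammaSeq a₃ n * Real.GammaSeq a₄ n := by
    intro n hn
    have hN : (0:ℝ) < n := by exact_mod_cast hn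
    have hprod : ∀ s : ℝ, 0 < s → 0 < ∏ j ∈ Finset.range (n+1), (s + (j:ℝ)) := by
      intro s hs
      exact Finset.prod_pos fun j _ => by positivity
    have ea : Real.GammaSeq a₁ n * Real.GammaSeq a₂ n * Real.GammaSeq a₃ n * Real.GammaSeq a₄ n
        = ((n:ℝ) ^ (a₁+a₂+a₃+a₄) * ((n.factorial : ℕ) : ℝ)^4) /
          ((∏ j ∈ Finset.range (n+1), (a₁ + (j:ℝ))) * (∏ j ∈ Finset.range (n+1), (a₂ + (j:ℝ)))
            * (∏ j ∈ Finset.range (n+1), (a₃ + (j:ℝ)))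
            * (∏ j ∈ Finset.range (n+1), (a₄ + (j:ℝ)))) := by
      simp only [Real.GammaSeq]
      rw [Real.rpow_add hN, Real.rpow_add hN, Real.rpow_add hN]
      ring
    have ep : Real.GammaSeq p₁ n * Real.GammaSeq p₂ n * Real.GammaSeq p₃ n * Real.GammaSeq p₄ n
        = ((n:ℝ) ^ (a₁+a₂+a₃+a₄) * ((n.factorial : ℕ) : ℝ)^4) /
          ((∏ j ∈ Finset.range (n+1), (p₁ + (j:ℝ))) * (∏ j ∈ Finset.range (n+1), (p₂ + (j:ℝ)))
            * (∏ j ∈ Finset.range (n+1), (p₃ + (j:ℝ)))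
            * (∏ j ∈ Finset.range (n+1), (p₄ + (j:ℝ)))) := by
      simp only [Real.GammaSeq]
      rw [hsum, Real.rpow_add hN, Real.rpow_add hN, Real.rpow_add hN]
      ring
    rw [ea, ep]
    have hT : 0 < (n:ℝ) ^ (a₁+a₂+a₃+a₄) * ((n.factorial : ℕ) : ℝ)^4 := by
      have : (0:ℝ) < ((n.factorial : ℕ) : ℝ) := by exact_mod_cast n.factorial_pos
      positivity
    have hDA : 0 < (∏ j ∈ Finset.range (n+1), (a₁ + (j:ℝ))) * (∏ j ∈ Finset.range (n+1), (a₂ + (j:ℝ)))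
            * (∏ j ∈ Finset.range (n+1), (a₃ + (j:ℝ)))
            * (∏ j ∈ Finset.range (n+1), (a₄ + (j:ℝ))) := by
      exact mul_pos (mul_pos (mul_pos (hprod _ ha₁) (hprod _ ha₂)) (hprod _ ha₃)) (hprod _ ha₄)
    have hDP : 0 < (∏ j ∈ Finset.range (n+1), (p₁ + (j:ℝ))) * (∏ j ∈ Finset.range (n+1), (p₂ + (j:ℝ)))
            * (∏ j ∈ Finset.range (n+1), (p₃ + (j:ℝ)))
            * (∏ j ∈ Finset.range (n+1), (p₄ + (j:ℝ))) := by
      exact mul_pos (mul_pos (mul_pos (hprod _ hp₁) (hprod _ hp₂)) (hprod _ hp₃)) (hprod _ hp₄)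
    have key : K * ((∏ j ∈ Finset.range (n+1), (a₁ + (j:ℝ))) * (∏ j ∈ Finset.range (n+1), (a₂ + (j:ℝ)))
            * (∏ j ∈ Finset.range (n+1), (a₃ + (j:ℝ)))
            * (∏ j ∈ Finset.range (n+1), (a₄ + (j:ℝ))))
        ≤ (∏ j ∈ Finset.range (n+1), (p₁ + (j:ℝ))) * (∏ j ∈ Finset.range (n+1), (p₂ + (j:ℝ)))
            * (∏ j ∈ Finset.range (n+1), (p₃ + (j:ℝ)))
            * (∏ j ∈ Finset.range (n+1), (p₄ + (j:ℝ))) := by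
      have hDAeq : (∏ j ∈ Finset.range (n+1), (a₁ + (j:ℝ))) * (∏ j ∈ Finset.range (n+1), (a₂ + (j:ℝ)))
            * (∏ j ∈ Finset.range (n+1), (a₃ + (j:ℝ)))
            * (∏ j ∈ Finset.range (n+1), (a₄ + (j:ℝ)))
          = ∏ j ∈ Finset.range (n+1), ((a₁+(j:ℝ))*(a₂+(j:ℝ))*(a₃+(j:ℝ))*(a₄+(j:ℝ))) := by
        rw [← Finset.prod_mul_distrib, ← Finset.prod_mul_distrib, ← Finset.prod_mul_distrib]
      have hDPeq : (∏ j ∈ Finset.range (n+1), (p₁ + (j:ℝ))) * (∏ j ∈ Finset.range (n+1), (p₂ + (j:ℝ)))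
            * (∏ j ∈ Finset.range (n+1), (p₃ + (j:ℝ)))
            * (∏ j ∈ Finset.range (n+1), (p₄ + (j:ℝ)))
          = ∏ j ∈ Finset.range (n+1), ((p₁+(j:ℝ))*(p₂+(j:ℝ))*(p₃+(j:ℝ))*(p₄+(j:ℝ))) := by
        rw [← Finset.prod_mul_distrib, ← Finset.prod_mul_distrib, ← Finset.prod_mul_distrib]
      rw [hDAeq, hDPeq, Finset.prod_range_succ', Finset.prod_range_succ']
      simp only [Nat.cast_zero, add_zero, Nat.cast_add, Nat.cast_one]
      have h00 : K * (a₁*a₂*a₃*a₄) = p₁*p₂*p₃*p₄ := div_mul_cancel₀ _ hapos.ne'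
      have hP : (∏ j ∈ Finset.range n, ((a₁+((j:ℝ)+1))*(a₂+((j:ℝ)+1))*(a₃+((j:ℝ)+1))*(a₄+((j:ℝ)+1))))
          ≤ (∏ j ∈ Finset.range n, ((p₁+((j:ℝ)+1))*(p₂+((j:ℝ)+1))*(p₃+((j:ℝ)+1))*(p₄+((j:ℝ)+1)))) := by
        refine Finset.prod_le_prod (fun j _ => by positivity) (fun j _ => ?_)
        exact hj ((j:ℝ)+1) (by positivity)
      calc K * ((∏ j ∈ Finset.range n, ((a₁+((j:ℝ)+1))*(a₂+((j:ℝ)+1))*(a₃+((j:ℝ)+1))*(a₄+((j:ℝ)+1))))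
              * (a₁*a₂*a₃*a₄))
          = (∏ j ∈ Finset.range n, ((a₁+((j:ℝ)+1))*(a₂+((j:ℝ)+1))*(a₃+((j:ℝ)+1))*(a₄+((j:ℝ)+1))))
              * (K * (a₁*a₂*a₃*a₄)) := by ring
        _ = (∏ j ∈ Finset.range n, ((a₁+((j:ℝ)+1))*(a₂+((j:ℝ)+1))*(a₃+((j:ℝ)+1))*(a₄+((j:ℝ)+1))))
              * (p₁*p₂*p₃*p₄) := by rw [h00]
        _ ≤ (∏ j ∈ Finset.range n, ((p₁+((j:ℝ)+1))*(p₂+((j:ℝ)+1))*(p₃+((j:ℝ)+1))*(p₄+((j:ℝ)+1))))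
              * (p₁*p₂*p₃*p₄) := by
            exact mul_le_mul_of_nonneg_right hP (by positivity)
    rw [mul_div_assoc', div_le_div_iff₀ hDP hDA]
    calc K * ((n:ℝ) ^ (a₁+a₂+a₃+a₄) * ((n.factorial : ℕ) : ℝ)^4) * _
        = ((n:ℝ) ^ (a₁+a₂+a₃+a₄) * ((n.factorial : ℕ) : ℝ)^4) * (K * _) := by ring
      _ ≤ _ := mul_le_mul_of_nonneg_left key hT.le
  have ta := (((Real.GammaSeq_tendsto_Gamma a₁).mul (Real.GammaSeq_tendsto_Gamma a₂)).mul
      (Real.GammaSeq_tendsto_Gamma a₃)).mul (Real.GammaSeq_tendsto_Gamma a₄)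
  have tp := ((((Real.GammaSeq_tendsto_Gamma p₁).mul (Real.GammaSeq_tendsto_Gamma p₂)).mul
      (Real.GammaSeq_tendsto_Gamma p₃)).mul (Real.GammaSeq_tendsto_Gamma p₄)).const_mul K
  have hle : K * (Real.Gamma p₁ * Real.Gamma p₂ * Real.Gamma p₃ * Real.Gamma p₄) ≤
      Real.Gamma a₁ * Real.Gamma a₂ * Real.Gamma a₃ * Real.Gamma a₄ :=
    le_of_tendsto_of_tendsto tp ta (Filter.eventually_atTop.2 ⟨1, claim⟩)
  have hppos : 0 < Real.Gamma p₁ * Real.Gamma p₂ * Real.Gamma p₃ * Real.Gamma p₄ :=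
    mul_pos (mul_pos (mul_pos (Real.Gamma_pos_of_pos hp₁) (Real.Gamma_pos_of_pos hp₂))
      (Real.Gamma_pos_of_pos hp₃)) (Real.Gamma_pos_of_pos hp₄)
  nlinarith [hle, hppos, hK1]

/-- `Γ(x+c)/Γ(x+1)` is strictly decreasing: cross-multiplied form. -/
private lemma I1 (c x₁ x₂ : ℝ) (hc0 : 0 < c) (hc1 : c < 1) (hx1 : -c < x₁) (h12 : x₁ < x₂) :
    Real.Gamma (x₂ + c) * Real.Gamma (x₁ + 1) < Real.Gamma (x₁ + c) * Real.Gamma (x₂ + 1) := by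
  have h := gamma_four_lt (x₁+c) (x₂+1) 1 1 (x₂+c) (x₁+1) 1 1
    (by linarith) (by linarith) one_pos one_pos (by linarith) (by linarith) one_pos one_pos
    (by ring)
    (fun u hu => by nlinarith [mul_nonneg (mul_nonneg (sub_nonneg.2 h12.le)
      (by linarith : (0:ℝ) ≤ 1 - c)) (sq_nonneg (1+u))])
    (by nlinarith [mul_pos (sub_pos.2 h12) (by linarith : (0:ℝ) < 1 - c)])
  simpa [Real.Gamma_one] using h


/-- `Γ(y+c)/Γ(y)` is strictly increasing on positives: cross-multiplied form. -/
private lemma I2 (c y₁ y₂ : ℝ) (hc0 : 0 < c) (hy1 : 0 < y₁) (h12 : y₁ < y₂) :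
    Real.Gamma (y₁ + c) * Real.Gamma y₂ < Real.Gamma (y₂ + c) * Real.Gamma y₁ := by
  have hj : ∀ u : ℝ, 0 ≤ u →
      (y₂+c+u)*(y₁+u)*(1+u)*(1+u) ≤ (y₁+c+u)*(y₂+u)*(1+u)*(1+u) := by
    intro u hu
    have k : (y₁+c+u)*(y₂+u)*(1+u)*(1+u) - (y₂+c+u)*(y₁+u)*(1+u)*(1+u)
        = c*(y₂-y₁)*((1+u)*(1+u)) := by ring
    have hn : 0 ≤ c*(y₂-y₁)*((1+u)*(1+u)) := by
      have h1 : (0:ℝ) ≤ (1+u)*(1+u) := by nlinarith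
      have h2 : (0:ℝ) ≤ c*(y₂-y₁) := mul_nonneg hc0.le (by linarith)
      exact mul_nonneg h2 h1
    linarith
  have h0 : (y₂+c)*y₁*1*1 < (y₁+c)*y₂*1*1 := by nlinarith [mul_pos hc0 (sub_pos.2 h12)]
  have h := gamma_four_lt (y₂+c) y₁ 1 1 (y₁+c) y₂ 1 1
    (by linarith) hy1 one_pos one_pos (by linarith) (by linarith) one_pos one_pos
    (by ring) (fun u hu => by have := hj u hu; linarith) h0
  simpa [Real.Gamma_one] using h

/-- Key inequality: `F(x)F(y)` with `F(t)=Γ(t+c)/Γ(t+1)` increases as the pair spreads. -/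
private lemma I3 (c x₁ x₂ y₁ y₂ : ℝ) (hc0 : 0 < c) (hc1 : c < 1)
    (hy2 : -c < y₂) (h21 : y₂ < y₁) (hyx : y₁ ≤ x₁) (hx12 : x₁ < x₂)
    (hs : x₁ + y₁ = x₂ + y₂) :
    Real.Gamma (x₁ + c) * Real.Gamma (y₁ + c) * Real.Gamma (x₂ + 1) * Real.Gamma (y₂ + 1) <
      Real.Gamma (x₂ + c) * Real.Gamma (y₂ + c) * Real.Gamma (x₁ + 1) * Real.Gamma (y₁ + 1) := by
  have hy2' : y₂ = x₁ + y₁ - x₂ := by linarith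
  subst hy2'
  have hδ : 0 < x₁*y₁ - x₂*(x₁ + y₁ - x₂) := by
    nlinarith [mul_pos (sub_pos.2 hx12) (by linarith : (0:ℝ) < x₂ - y₁)]
  have hE : ∀ u : ℝ, 0 ≤ u → (0:ℝ) ≤ 1+c+2*u+x₁+y₁ := by intro u hu; linarith
  have hj : ∀ u : ℝ, 0 ≤ u →
      (x₂+c+u)*((x₁+y₁-x₂)+c+u)*(x₁+1+u)*(y₁+1+u)
        ≤ (x₁+c+u)*(y₁+c+u)*(x₂+1+u)*((x₁+y₁-x₂)+1+u) := by
    intro u hu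
    have k : (x₁+c+u)*(y₁+c+u)*(x₂+1+u)*((x₁+y₁-x₂)+1+u)
        - (x₂+c+u)*((x₁+y₁-x₂)+c+u)*(x₁+1+u)*(y₁+1+u)
        = (x₁*y₁ - x₂*(x₁+y₁-x₂))*(1-c)*(1+c+2*u+x₁+y₁) := by ring
    have hn : 0 ≤ (x₁*y₁ - x₂*(x₁+y₁-x₂))*(1-c)*(1+c+2*u+x₁+y₁) :=
      mul_nonneg (mul_nonneg hδ.le (by linarith)) (hE u hu)
    linarith
  have h0 : (x₂+c)*((x₁+y₁-x₂)+c)*(x₁+1)*(y₁+1)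
      < (x₁+c)*(y₁+c)*(x₂+1)*((x₁+y₁-x₂)+1) := by
    have k : (x₁+c)*(y₁+c)*(x₂+1)*((x₁+y₁-x₂)+1)
        - (x₂+c)*((x₁+y₁-x₂)+c)*(x₁+1)*(y₁+1)
        = (x₁*y₁ - x₂*(x₁+y₁-x₂))*(1-c)*(1+c+x₁+y₁) := by ring
    have hn : 0 < (x₁*y₁ - x₂*(x₁+y₁-x₂))*(1-c)*(1+c+x₁+y₁) :=
      mul_pos (mul_pos hδ (by linarith)) (by linarith)
    linarith
  exact gamma_four_lt (x₂+c) ((x₁+y₁-x₂)+c) (x₁+1) (y₁+1) (x₁+c) (y₁+c) (x₂+1) ((x₁+y₁-x₂)+1)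
    (by linarith) (by linarith) (by linarith) (by linarith)
    (by linarith) (by linarith) (by linarith) (by linarith)
    (by ring) hj h0

/-- The main monotonicity statement, in the variables `x = (β-α)/2`, `y = (d-β)/2`. -/
private lemma main_core (c x₁ x₂ y₁ y₂ : ℝ) (hc0 : 0 < c) (hc1 : c < 1)
    (hx1 : 0 < x₁) (hx12 : x₁ < x₂) (hy21 : y₂ < y₁) (hyx : y₁ < x₁) (hy2 : -c < y₂)
    (hs : x₁ + y₁ = x₂ + y₂) :
    Real.Gamma (x₂ + c) / Real.Gamma (x₂ + 1) * (Real.Gamma (y₂ + c) / Real.Gamma y₂) <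
      Real.Gamma (x₁ + c) / Real.Gamma (x₁ + 1) * (Real.Gamma (y₁ + c) / Real.Gamma y₁) := by
  have hx2 : 0 < x₂ := lt_trans hx1 hx12
  have hy1c : -c < y₁ := lt_trans hy2 hy21
  have hgx1c : 0 < Real.Gamma (x₁ + c) := Real.Gamma_pos_of_pos (by linarith)
  have hgx2c : 0 < Real.Gamma (x₂ + c) := Real.Gamma_pos_of_pos (by linarith)
  have hgx11 : 0 < Real.Gamma (x₁ + 1) := Real.Gamma_pos_of_pos (by linarith)
  have hgx21 : 0 < Real.Gamma (x₂ + 1) := Real.Gamma_pos_of_pos (by linarith)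
  have hgy1c : 0 < Real.Gamma (y₁ + c) := Real.Gamma_pos_of_pos (by linarith)
  have hgy2c : 0 < Real.Gamma (y₂ + c) := Real.Gamma_pos_of_pos (by linarith)
  have hgy11 : 0 < Real.Gamma (y₁ + 1) := Real.Gamma_pos_of_pos (by linarith)
  have hgy21 : 0 < Real.Gamma (y₂ + 1) := Real.Gamma_pos_of_pos (by linarith)
  have hFlt : Real.Gamma (x₂ + c) / Real.Gamma (x₂ + 1)
      < Real.Gamma (x₁ + c) / Real.Gamma (x₁ + 1) :=
    (div_lt_div_iff₀ hgx21 hgx11).2 (I1 c x₁ x₂ hc0 hc1 (by linarith) hx12)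
  have hF2pos : 0 < Real.Gamma (x₂ + c) / Real.Gamma (x₂ + 1) := div_pos hgx2c hgx21
  have htrans : ∀ y : ℝ, y ≠ 0 → Real.Gamma (y + c) / Real.Gamma y
      = y * (Real.Gamma (y + c) / Real.Gamma (y + 1)) := by
    intro y hy
    rw [Real.Gamma_add_one hy, ← mul_div_assoc, mul_div_mul_left _ _ hy]
  rcases lt_trichotomy y₂ 0 with h2neg | h2zero | h2pos
  · -- y₂ < 0
    have hG2pos : 0 < Real.Gamma (y₂ + c) / Real.Gamma (y₂ + 1) := div_pos hgy2c hgy21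
    rcases lt_trichotomy y₁ 0 with h1neg | h1zero | h1pos
    · -- both negative: the hard case, via I3
      rw [htrans y₁ h1neg.ne, htrans y₂ h2neg.ne]
      have hG1pos : 0 < Real.Gamma (y₁ + c) / Real.Gamma (y₁ + 1) := div_pos hgy1c hgy11
      have hFF : Real.Gamma (x₁ + c) / Real.Gamma (x₁ + 1) * (Real.Gamma (y₁ + c) / Real.Gamma (y₁ + 1))
          < Real.Gamma (x₂ + c) / Real.Gamma (x₂ + 1) * (Real.Gamma (y₂ + c) / Real.Gamma (y₂ + 1)) := by
        rw [div_mul_div_comm, div_mul_div_comm]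
        rw [div_lt_div_iff₀ (mul_pos hgx11 hgy11) (mul_pos hgx21 hgy21)]
        have := I3 c x₁ x₂ y₁ y₂ hc0 hc1 hy2 hy21 hyx.le hx12 hs
        nlinarith [this]
      have hFF1pos : 0 < Real.Gamma (x₁ + c) / Real.Gamma (x₁ + 1) * (Real.Gamma (y₁ + c) / Real.Gamma (y₁ + 1)) :=
        mul_pos (div_pos hgx1c hgx11) hG1pos
      have hneg : (-y₁) * (Real.Gamma (x₁ + c) / Real.Gamma (x₁ + 1) * (Real.Gamma (y₁ + c) / Real.Gamma (y₁ + 1)))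
          < (-y₂) * (Real.Gamma (x₂ + c) / Real.Gamma (x₂ + 1) * (Real.Gamma (y₂ + c) / Real.Gamma (y₂ + 1))) :=
        mul_lt_mul'' (by linarith) hFF (by linarith) hFF1pos.le
      nlinarith [hneg]
    · -- y₁ = 0 : RHS is zero, LHS negative
      rw [h1zero, Real.Gamma_zero, div_zero, mul_zero, htrans y₂ h2neg.ne]
      have : 0 < (-y₂) * (Real.Gamma (y₂ + c) / Real.Gamma (y₂ + 1)) :=
        mul_pos (by linarith) hG2pos
      nlinarith [hF2pos, this]
    · -- y₁ > 0 : RHS positive, LHS negative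
      have hR : 0 < Real.Gamma (x₁ + c) / Real.Gamma (x₁ + 1) * (Real.Gamma (y₁ + c) / Real.Gamma y₁) :=
        mul_pos (div_pos hgx1c hgx11) (div_pos hgy1c (Real.Gamma_pos_of_pos h1pos))
      rw [htrans y₂ h2neg.ne]
      have : 0 < (-y₂) * (Real.Gamma (y₂ + c) / Real.Gamma (y₂ + 1)) :=
        mul_pos (by linarith) hG2pos
      nlinarith [hF2pos, this, hR]
  · -- y₂ = 0 : LHS zero, RHS positive
    rw [h2zero, Real.Gamma_zero, div_zero, mul_zero]
    have h1pos : 0 < y₁ := by linarith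
    exact mul_pos (div_pos hgx1c hgx11) (div_pos hgy1c (Real.Gamma_pos_of_pos h1pos))
  · -- both positive
    have h1pos : 0 < y₁ := by linarith
    have hgy1 : 0 < Real.Gamma y₁ := Real.Gamma_pos_of_pos h1pos
    have hgy2 : 0 < Real.Gamma y₂ := Real.Gamma_pos_of_pos h2pos
    have hHlt : Real.Gamma (y₂ + c) / Real.Gamma y₂ < Real.Gamma (y₁ + c) / Real.Gamma y₁ :=
      (div_lt_div_iff₀ hgy2 hgy1).2 (I2 c y₂ y₁ hc0 h2pos hy21)
    have hH2pos : 0 < Real.Gamma (y₂ + c) / Real.Gamma y₂ := div_pos hgy2c hgy2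
    exact mul_lt_mul'' hFlt hHlt hF2pos.le hH2pos.le

/-- `Ψ` is strictly decreasing on the interval `((d+α)/2, d+α)`. -/
theorem Psi_strictAntiOn (d : ℕ) (hd : 2 ≤ d) (α : ℝ) (hα₁ : 1 < α) (hα₂ : α < 2) :
    StrictAntiOn (Psi d α) (Set.Ioo (((d : ℝ) + α) / 2) ((d : ℝ) + α)) := by
  have hd2 : (2:ℝ) ≤ (d:ℝ) := by exact_mod_cast hd
  have hval : ∀ β : ℝ, ((d:ℝ)+α)/2 < β →
      Psi d α β = 2^α/2 * (Real.Gamma ((β-α)/2 + α/2) / Real.Gamma ((β-α)/2 + 1) *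
        (Real.Gamma (((d:ℝ)-β)/2 + α/2) / Real.Gamma (((d:ℝ)-β)/2))) := by
    intro β hβ
    have hx : 0 < (β-α)/2 := by linarith
    have hgx : 0 < Real.Gamma ((β-α)/2) := Real.Gamma_pos_of_pos hx
    have h1 : β/2 = (β-α)/2 + α/2 := by ring
    have h2 : ((d:ℝ)-β+α)/2 = ((d:ℝ)-β)/2 + α/2 := by ring
    have hβα : β - α = 2 * ((β-α)/2) := by ring
    rw [Psi, h1, h2, Real.Gamma_add_one hx.ne', hβα]
    rw [div_mul_div_comm, div_mul_div_comm, div_mul_div_comm]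
    congr 1 <;> ring
  intro β₁ hβ₁ β₂ hβ₂ h12
  rw [hval β₁ hβ₁.1, hval β₂ hβ₂.1]
  have h1r := hβ₁.2
  have h2l := hβ₂.1
  have h2r := hβ₂.2
  have h1l := hβ₁.1
  have hcore := main_core (α/2) ((β₁-α)/2) ((β₂-α)/2) (((d:ℝ)-β₁)/2) (((d:ℝ)-β₂)/2)
    (by linarith) (by linarith) (by linarith) (by linarith) (by linarith) (by linarith)
    (by linarith) (by ring)
  have ht : (0:ℝ) < 2^α/2 := by positivity
  exact mul_lt_mul_of_pos_left hcore ht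
end

section
/- Let d ≥ 2 be an integer, α ∈ (1,2), and β ∈ ((d+α)/2, d). Let ψ(x) = Γ'(x)/Γ(x) denote the digamma function, where Γ is the real Gamma function and Γ' its derivative. Then ψ((d−β)/2) − ψ((d+α−β)/2) + ψ(β/2) − ψ((β−α)/2) < 0. -/
/-!
The recurrence `ψ(x + 1) = ψ(x) + 1/x` telescopes to
`ψ(a + h) - ψ(a) = ∑ₖ (1/(a + k) - 1/(a + k + h))`; the tail `ψ(a + n + h) - ψ(a + n)` tends
to `0` because `ψ` is monotone (`Γ` is log-convex) and grows by at most `m/x` over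
`[x, x + m]`. Each term of the series strictly decreases in `a`, so the increments of `ψ` over
intervals of length `h` strictly decrease. With `a = (d - β)/2 < b = (β - α)/2` and `h = α/2`,
the claim is `ψ(b + h) - ψ(b) < ψ(a + h) - ψ(a)`.
-/

/-- The digamma function `ψ(x) = Γ'(x)/Γ(x)`, where `Γ` is the real Gamma function. -/
noncomputable def digamma (x : ℝ) : ℝ := deriv Real.Gamma x / Real.Gamma x

open Filter Set Topology Finset

theorem digamma_eq_logDeriv (x : ℝ) : digamma x = logDeriv Real.Gamma x := rfl

theorem differentiableAt_Gamma_of_pos {x : ℝ} (hx : 0 < x) :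
    DifferentiableAt ℝ Real.Gamma x :=
  Real.differentiableAt_Gamma fun m => ((neg_nonpos.2 m.cast_nonneg).trans_lt hx).ne'

theorem digamma_add_one {x : ℝ} (hx : 0 < x) : digamma (x + 1) = digamma x + 1 / x := by
  have hshift : logDeriv (Real.Gamma ∘ (· + 1)) x = digamma (x + 1) := by
    rw [logDeriv_comp (differentiableAt_Gamma_of_pos (by linarith)) (by fun_prop)]
    simp [digamma_eq_logDeriv]
  have hrec : Real.Gamma ∘ (· + 1) =ᶠ[𝓝 x] fun y => y * Real.Gamma y := by
    filter_upwards [eventually_gt_nhds hx] with y hy using Real.Gamma_add_one hy.ne'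
  rw [← hshift, (logDeriv_congr_nhds hrec).eq_of_nhds,
    logDeriv_mul (f := fun y => y) x hx.ne' (Real.Gamma_pos_of_pos hx).ne' differentiableAt_fun_id
    (differentiableAt_Gamma_of_pos hx), logDeriv_id', add_comm, digamma_eq_logDeriv]

theorem digamma_add_nat {x : ℝ} (hx : 0 < x) (n : ℕ) :
    digamma (x + n) = digamma x + ∑ k ∈ range n, 1 / (x + k) := by
  induction n with
  | zero => simp
  | succ n ih =>
    rw [Nat.cast_succ, ← add_assoc, digamma_add_one (by positivity), ih, sum_range_succ,
      add_assoc]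

theorem monotoneOn_digamma : MonotoneOn digamma (Ioi 0) := by
  have hdiff : ∀ x ∈ Ioi (0 : ℝ), DifferentiableAt ℝ (Real.log ∘ Real.Gamma) x :=
    fun x (hx : 0 < x) => (differentiableAt_Gamma_of_pos hx).log (Real.Gamma_pos_of_pos hx).ne'
  refine (Real.convexOn_log_Gamma.monotoneOn_deriv hdiff).congr fun x (hx : 0 < x) => ?_
  exact deriv.log (differentiableAt_Gamma_of_pos hx) (Real.Gamma_pos_of_pos hx).ne'

theorem tendsto_digamma_add_sub_digamma_atTop {h : ℝ} (hh : 0 ≤ h) :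
    Tendsto (fun x => digamma (x + h) - digamma x) atTop (𝓝 0) := by
  set m := ⌈h⌉₊
  have hbound : ∀ᶠ x in atTop, digamma (x + h) - digamma x ≤ m / x := by
    filter_upwards [eventually_gt_atTop 0] with x hx
    have hsum : ∑ k ∈ range m, 1 / (x + k) ≤ m / x := by
      calc ∑ k ∈ range m, 1 / (x + k) ≤ ∑ _k ∈ range m, 1 / x :=
            sum_le_sum fun k _ => one_div_le_one_div_of_le hx (by simp)
        _ = m / x := by simp [div_eq_mul_inv]
    have hmono := monotoneOn_digamma (a := x + h) (b := x + m) (mem_Ioi.2 (by linarith))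
      (mem_Ioi.2 (by positivity)) (by linarith [Nat.le_ceil h])
    linarith [digamma_add_nat hx m]
  have hnonneg : ∀ᶠ x in atTop, 0 ≤ digamma (x + h) - digamma x := by
    filter_upwards [eventually_gt_atTop 0] with x hx
    exact sub_nonneg.2 (monotoneOn_digamma hx (mem_Ioi.2 (by positivity)) (by linarith))
  exact squeeze_zero' hnonneg hbound (tendsto_const_nhds.div_atTop tendsto_id)

theorem hasSum_digamma_add_sub_digamma {a h : ℝ} (ha : 0 < a) (hh : 0 ≤ h) :
    HasSum (fun k : ℕ => 1 / (a + k) - 1 / (a + k + h)) (digamma (a + h) - digamma a) := by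
  have hpartial : ∀ n : ℕ, ∑ k ∈ range n, (1 / (a + k) - 1 / (a + k + h)) =
      (digamma (a + h) - digamma a) - (digamma (a + n + h) - digamma (a + n)) := by
    intro n
    have hah := digamma_add_nat (x := a + h) (by positivity) n
    rw [sum_sub_distrib, digamma_add_nat ha n, show a + n + h = a + h + n by ring, hah]
    simp only [add_right_comm a h]
    ring
  have htail := (tendsto_digamma_add_sub_digamma_atTop hh).comp
    (tendsto_atTop_add_const_left atTop a tendsto_natCast_atTop_atTop)
  refine (hasSum_iff_tendsto_nat_of_nonneg (fun k => ?_) _).2 ?_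
  · exact sub_nonneg.2 (one_div_le_one_div_of_le (by positivity) (by linarith))
  · simp only [hpartial]
    simpa using tendsto_const_nhds.sub htail

theorem strictAntiOn_one_div_sub_one_div_add {h : ℝ} (hh : 0 < h) :
    StrictAntiOn (fun x : ℝ => 1 / x - 1 / (x + h)) (Ioi 0) := by
  intro x (hx : 0 < x) y (hy : 0 < y) hxy
  have hform : ∀ z : ℝ, 0 < z → 1 / z - 1 / (z + h) = h / (z * (z + h)) := fun z hz => by
    field_simp
    ring
  simp only [hform x hx, hform y hy]
  exact div_lt_div_of_pos_left hh (by positivity) (by nlinarith)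

theorem strictAntiOn_digamma_add_sub_digamma {h : ℝ} (hh : 0 < h) :
    StrictAntiOn (fun x => digamma (x + h) - digamma x) (Ioi 0) := by
  intro a (ha : 0 < a) b (hb : 0 < b) hab
  have hterm : ∀ k : ℕ, 1 / (b + k) - 1 / (b + k + h) < 1 / (a + k) - 1 / (a + k + h) :=
    fun k => strictAntiOn_one_div_sub_one_div_add hh (mem_Ioi.2 (by positivity))
      (mem_Ioi.2 (by positivity)) (by linarith)
  exact hasSum_lt (fun k => (hterm k).le) (hterm 0) (hasSum_digamma_add_sub_digamma hb hh.le)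
    (hasSum_digamma_add_sub_digamma ha hh.le)

theorem digamma_combination_neg_general (d : ℕ) (α β : ℝ)
    (hα₁ : 1 < α)
    (hβ₁ : ((d : ℝ) + α) / 2 < β) (hβ₂ : β < d) :
    digamma (((d : ℝ) - β) / 2) - digamma (((d : ℝ) + α - β) / 2) +
      digamma (β / 2) - digamma ((β - α) / 2) < 0 := by
  have key := strictAntiOn_digamma_add_sub_digamma (h := α / 2) (by linarith)
    (show 0 < ((d : ℝ) - β) / 2 by linarith) (show 0 < (β - α) / 2 by linarith)
    (show ((d : ℝ) - β) / 2 < (β - α) / 2 by linarith)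
  simp only [show ((d : ℝ) - β) / 2 + α / 2 = ((d : ℝ) + α - β) / 2 by ring,
    show (β - α) / 2 + α / 2 = β / 2 by ring] at key
  linarith

/-- For `d ≥ 2`, `α ∈ (1,2)` and `β ∈ ((d+α)/2, d)` one has
`ψ((d−β)/2) − ψ((d+α−β)/2) + ψ(β/2) − ψ((β−α)/2) < 0`. -/
theorem digamma_combination_neg (d : ℕ) (hd : 2 ≤ d) (α β : ℝ)
    (hα₁ : 1 < α) (hα₂ : α < 2)
    (hβ₁ : ((d : ℝ) + α) / 2 < β) (hβ₂ : β < d) :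
    digamma (((d : ℝ) - β) / 2) - digamma (((d : ℝ) + α - β) / 2) +
      digamma (β / 2) - digamma ((β - α) / 2) < 0 :=
  digamma_combination_neg_general d α β hα₁ hβ₁ hβ₂
end

section
/- Let d ≥ 1 be an integer and let N > 0. Then there exist constants 0 < c ≤ C, depending only on d and N, such that for all real numbers 0 < s < t and all x, y ∈ ℝ^d: c · t^{−d} ( t/(t + |x−y|) )^{d+N} ≤ ∫_{ℝ^d} (t−s)^{−d} ( (t−s)/((t−s) + |x−z|) )^{d+N} · s^{−d} ( s/(s + |z−y|) )^{d+N} dz ≤ C · t^{−d} ( t/(t + |x−y|) )^{d+N}. -/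
/-!
Write `K_u(r) = u ^ N * (u + r) ^ (-(d + N)) = u ^ (-d) * (u / (u + r)) ^ (d + N)`. Translating and
dilating by `u`, `∫ K_u(|z - w|) dz` is independent of `u` and `w`, and it is finite since `N > 0`.

Upper bound: as `|x - y| ≤ |x - z| + |z - y|` and `(t - s) + s = t`, one of `(t - s) + |x - z|` and
`s + |z - y|` is at least `(t + |x - y|) / 2`, so the corresponding factor is at most
`2 ^ (d + N) * K_t(|x - y|)`. Hence the integrand is at most `2 ^ (d + N) * K_t(|x - y|)` times the
sum of the two kernels, whose integral is twice the invariant integral.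

Lower bound: let `a = min s (t - s)` and integrate only over the ball of radius `a` around the
centre of the narrower kernel. There that kernel is at least `2 ^ (-(d + N)) * a ^ (-d)`, the other
one is at least `2 ^ (-N) * K_t(|x - y|)`, and the ball has measure `a ^ d` times that of the unit
ball.
-/

open MeasureTheory Metric Module

noncomputable def polyKernel (d N u r : ℝ) : ℝ := u ^ N * (u + r) ^ (-(d + N))

section Pointwise

variable {d N : ℝ}

lemma rpow_neg_mul_div_rpow_eq_polyKernel {u r : ℝ} (hu : 0 < u) (hr : 0 ≤ r) :
    u ^ (-d) * (u / (u + r)) ^ (d + N) = polyKernel d N u r := by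
  have hur : 0 < u + r := by positivity
  rw [polyKernel, Real.div_rpow hu.le hur.le, Real.rpow_neg hur.le, div_eq_mul_inv, ← mul_assoc,
    ← Real.rpow_add hu, neg_add_cancel_left]

lemma polyKernel_nonneg {u r : ℝ} (hu : 0 ≤ u) (hr : 0 ≤ r) : 0 ≤ polyKernel d N u r := by
  unfold polyKernel; positivity

@[fun_prop]
lemma measurable_polyKernel (d N u : ℝ) : Measurable (polyKernel d N u) := by
  unfold polyKernel; fun_prop

lemma polyKernel_eq_rpow_neg_mul {u r : ℝ} (hu : 0 < u) (hr : 0 ≤ r) :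
    polyKernel d N u r = u ^ (-d) * polyKernel d N 1 (u⁻¹ * r) := by
  have h : u + r = u * (1 + u⁻¹ * r) := by field_simp
  rw [polyKernel, polyKernel, h, Real.mul_rpow hu.le (by positivity), Real.one_rpow, one_mul,
    ← mul_assoc, ← Real.rpow_add hu, show N + -(d + N) = -d by ring]

lemma polyKernel_le_two_rpow_mul (hN : 0 ≤ N) (hdN : 0 ≤ d + N) {u t r r' : ℝ} (hu : 0 < u)
    (hut : u ≤ t) (hr : 0 ≤ r) (hr' : 0 ≤ r') (h : t + r ≤ 2 * (u + r')) :
    polyKernel d N u r' ≤ 2 ^ (d + N) * polyKernel d N t r := by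
  have ht : 0 < t := hu.trans_le hut
  have halve : ((t + r) / 2) ^ (-(d + N)) = 2 ^ (d + N) * (t + r) ^ (-(d + N)) := by
    rw [Real.div_rpow (by positivity) zero_le_two, Real.rpow_neg zero_le_two, div_inv_eq_mul,
      mul_comm]
  have hpow : u ^ N ≤ t ^ N := Real.rpow_le_rpow hu.le hut hN
  have hdecay : (u + r') ^ (-(d + N)) ≤ ((t + r) / 2) ^ (-(d + N)) :=
    Real.rpow_le_rpow_of_nonpos (by positivity) (by linarith) (by linarith)
  calc polyKernel d N u r' ≤ t ^ N * ((t + r) / 2) ^ (-(d + N)) :=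
        mul_le_mul hpow hdecay (by positivity) (by positivity)
    _ = 2 ^ (d + N) * polyKernel d N t r := by rw [halve, polyKernel]; ring

lemma polyKernel_mul_polyKernel_le (hN : 0 ≤ N) (hdN : 0 ≤ d + N) {a b r r₁ r₂ : ℝ}
    (ha : 0 < a) (hb : 0 < b) (hr : 0 ≤ r) (hr₁ : 0 ≤ r₁) (hr₂ : 0 ≤ r₂) (h : r ≤ r₁ + r₂) :
    polyKernel d N a r₁ * polyKernel d N b r₂ ≤
      2 ^ (d + N) * polyKernel d N (a + b) r * (polyKernel d N a r₁ + polyKernel d N b r₂) := by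
  have hK₁ := polyKernel_nonneg (d := d) (N := N) ha.le hr₁
  have hK₂ := polyKernel_nonneg (d := d) (N := N) hb.le hr₂
  have hK := polyKernel_nonneg (d := d) (N := N) (add_pos ha hb).le hr
  rcases le_total (a + b + r) (2 * (a + r₁)) with h₁ | h₁
  · calc polyKernel d N a r₁ * polyKernel d N b r₂
        ≤ 2 ^ (d + N) * polyKernel d N (a + b) r * polyKernel d N b r₂ := by
          gcongr
          exact polyKernel_le_two_rpow_mul hN hdN ha (by linarith) hr hr₁ h₁
      _ ≤ _ := by gcongr; linarith
  · calc polyKernel d N a r₁ * polyKernel d N b r₂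
        ≤ polyKernel d N a r₁ * (2 ^ (d + N) * polyKernel d N (a + b) r) := by
          gcongr
          exact polyKernel_le_two_rpow_mul hN hdN hb (by linarith) hr hr₂ (by linarith)
      _ ≤ _ := by
          rw [mul_comm]
          gcongr
          linarith

lemma two_rpow_neg_mul_polyKernel_le (hN : 0 ≤ N) (hdN : 0 ≤ d + N) {a b r r' : ℝ} (ha : 0 < a)
    (hab : a ≤ b) (hr : 0 ≤ r) (hr' : 0 ≤ r') (h : r' ≤ a + r) :
    2 ^ (-N) * polyKernel d N (a + b) r ≤ polyKernel d N b r' := by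
  have hb : 0 < b := ha.trans_le hab
  have halve : 2 ^ (-N) * (a + b) ^ N = ((a + b) / 2) ^ N := by
    rw [Real.div_rpow (by positivity) zero_le_two, Real.rpow_neg zero_le_two, div_eq_inv_mul]
  calc 2 ^ (-N) * polyKernel d N (a + b) r = ((a + b) / 2) ^ N * (a + b + r) ^ (-(d + N)) := by
        rw [polyKernel, ← mul_assoc, halve]
    _ ≤ b ^ N * (b + r') ^ (-(d + N)) :=
        mul_le_mul (Real.rpow_le_rpow (by positivity) (by linarith) hN)
          (Real.rpow_le_rpow_of_nonpos (by positivity) (by linarith) (by linarith))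
          (by positivity) (by positivity)

lemma two_rpow_neg_mul_rpow_neg_le_polyKernel (hdN : 0 ≤ d + N) {a r : ℝ} (ha : 0 < a)
    (hr : 0 ≤ r) (hra : r ≤ a) :
    2 ^ (-(d + N)) * a ^ (-d) ≤ polyKernel d N a r := by
  calc 2 ^ (-(d + N)) * a ^ (-d) = a ^ N * (2 * a) ^ (-(d + N)) := by
        rw [Real.mul_rpow zero_le_two ha.le, mul_left_comm, ← Real.rpow_add ha]
        ring_nf
    _ ≤ polyKernel d N a r :=
        mul_le_mul_of_nonneg_left
          (Real.rpow_le_rpow_of_nonpos (by positivity) (by linarith) (by linarith))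
          (by positivity)

end Pointwise

section Integral

variable {E : Type*} [NormedAddCommGroup E] [NormedSpace ℝ E] [FiniteDimensional ℝ E]
  [MeasurableSpace E] [BorelSpace E] (μ : Measure E) [μ.IsAddHaarMeasure] {N : ℝ}

lemma lintegral_polyKernel_norm_sub {u : ℝ} (hu : 0 < u) (w : E) :
    ∫⁻ z, ENNReal.ofReal (polyKernel (finrank ℝ E) N u ‖z - w‖) ∂μ =
      ∫⁻ z, ENNReal.ofReal (polyKernel (finrank ℝ E) N 1 ‖z‖) ∂μ := by
  set d : ℝ := (finrank ℝ E : ℝ)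
  have hscale : ∫⁻ z, ENNReal.ofReal (polyKernel d N 1 ‖u⁻¹ • z‖) ∂μ =
      ENNReal.ofReal (u ^ d) * ∫⁻ z, ENNReal.ofReal (polyKernel d N 1 ‖z‖) ∂μ := by
    rw [← lintegral_map (f := fun z ↦ ENNReal.ofReal (polyKernel d N 1 ‖z‖)) (by fun_prop)
      (measurable_const_smul u⁻¹),
      Measure.map_addHaar_smul μ (inv_ne_zero hu.ne'), lintegral_smul_measure, inv_pow, inv_inv,
      abs_of_pos (by positivity), ← Real.rpow_natCast, smul_eq_mul]
  calc ∫⁻ z, ENNReal.ofReal (polyKernel d N u ‖z - w‖) ∂μ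
      = ∫⁻ z, ENNReal.ofReal (polyKernel d N u ‖z‖) ∂μ :=
        lintegral_sub_right_eq_self (fun z ↦ ENNReal.ofReal (polyKernel d N u ‖z‖)) w
    _ = ∫⁻ z, ENNReal.ofReal (u ^ (-d)) * ENNReal.ofReal (polyKernel d N 1 ‖u⁻¹ • z‖) ∂μ := by
        refine lintegral_congr fun z ↦ ?_
        rw [polyKernel_eq_rpow_neg_mul hu (norm_nonneg z), ENNReal.ofReal_mul (by positivity),
          norm_smul, Real.norm_of_nonneg (inv_nonneg.2 hu.le)]
    _ = ∫⁻ z, ENNReal.ofReal (polyKernel d N 1 ‖z‖) ∂μ := by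
        rw [lintegral_const_mul' _ _ ENNReal.ofReal_ne_top, hscale, ← mul_assoc,
          ← ENNReal.ofReal_mul (by positivity), ← Real.rpow_add hu, neg_add_cancel,
          Real.rpow_zero, ENNReal.ofReal_one, one_mul]

lemma lintegral_polyKernel_one_lt_top (hN : 0 < N) :
    ∫⁻ z, ENNReal.ofReal (polyKernel (finrank ℝ E) N 1 ‖z‖) ∂μ < ⊤ := by
  simpa only [polyKernel, Real.one_rpow, one_mul]
    using finite_integral_one_add_norm (μ := μ) (r := finrank ℝ E + N) (by linarith)

lemma lintegral_polyKernel_mul_polyKernel_le (hN : 0 ≤ N) {a b : ℝ} (ha : 0 < a) (hb : 0 < b)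
    (x y : E) :
    ∫⁻ z, ENNReal.ofReal
        (polyKernel (finrank ℝ E) N a ‖x - z‖ * polyKernel (finrank ℝ E) N b ‖z - y‖) ∂μ ≤
      ENNReal.ofReal (2 ^ ((finrank ℝ E : ℝ) + N) * polyKernel (finrank ℝ E) N (a + b) ‖x - y‖) *
        (2 * ∫⁻ z, ENNReal.ofReal (polyKernel (finrank ℝ E) N 1 ‖z‖) ∂μ) := by
  set d : ℝ := (finrank ℝ E : ℝ)
  set M : ℝ := 2 ^ (d + N) * polyKernel d N (a + b) ‖x - y‖
  have hM : 0 ≤ M :=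
    mul_nonneg (by positivity) (polyKernel_nonneg (add_pos ha hb).le (norm_nonneg _))
  have hpoint : ∀ z, polyKernel d N a ‖x - z‖ * polyKernel d N b ‖z - y‖ ≤
      M * (polyKernel d N a ‖z - x‖ + polyKernel d N b ‖z - y‖) := fun z ↦ by
    rw [norm_sub_rev z x]
    exact polyKernel_mul_polyKernel_le hN (by positivity) ha hb (norm_nonneg _) (norm_nonneg _)
      (norm_nonneg _) (norm_sub_le_norm_sub_add_norm_sub x z y)
  calc ∫⁻ z, ENNReal.ofReal (polyKernel d N a ‖x - z‖ * polyKernel d N b ‖z - y‖) ∂μ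
      ≤ ∫⁻ z, ENNReal.ofReal M * (ENNReal.ofReal (polyKernel d N a ‖z - x‖) +
          ENNReal.ofReal (polyKernel d N b ‖z - y‖)) ∂μ := by
        refine lintegral_mono fun z ↦ ?_
        rw [← ENNReal.ofReal_add (polyKernel_nonneg ha.le (norm_nonneg _))
          (polyKernel_nonneg hb.le (norm_nonneg _)), ← ENNReal.ofReal_mul hM]
        exact ENNReal.ofReal_le_ofReal (hpoint z)
    _ = ENNReal.ofReal M * (2 * ∫⁻ z, ENNReal.ofReal (polyKernel d N 1 ‖z‖) ∂μ) := by
        rw [lintegral_const_mul' _ _ ENNReal.ofReal_ne_top, lintegral_add_left (by fun_prop),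
          lintegral_polyKernel_norm_sub μ ha, lintegral_polyKernel_norm_sub μ hb, two_mul]

lemma le_lintegral_polyKernel_mul_polyKernel_of_le (hN : 0 ≤ N) {a b : ℝ} (ha : 0 < a)
    (hab : a ≤ b) (x y : E) :
    ENNReal.ofReal (2 ^ (-((finrank ℝ E : ℝ) + 2 * N)) *
        polyKernel (finrank ℝ E) N (a + b) ‖x - y‖) * μ (ball 0 1) ≤
      ∫⁻ z, ENNReal.ofReal
        (polyKernel (finrank ℝ E) N b ‖x - z‖ * polyKernel (finrank ℝ E) N a ‖z - y‖) ∂μ := by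
  set d : ℝ := (finrank ℝ E : ℝ)
  set L : ℝ := 2 ^ (-(d + 2 * N)) * polyKernel d N (a + b) ‖x - y‖ with hL
  have hK : 0 ≤ polyKernel d N (a + b) ‖x - y‖ := polyKernel_nonneg (by linarith) (norm_nonneg _)
  have hLa : 0 ≤ L * a ^ (-d) := mul_nonneg (mul_nonneg (by positivity) hK) (by positivity)
  have hpoint : ∀ z ∈ ball y a,
      L * a ^ (-d) ≤ polyKernel d N b ‖x - z‖ * polyKernel d N a ‖z - y‖ := fun z hz ↦ by
    rw [mem_ball, dist_eq_norm] at hz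
    have hfar : 2 ^ (-N) * polyKernel d N (a + b) ‖x - y‖ ≤ polyKernel d N b ‖x - z‖ :=
      two_rpow_neg_mul_polyKernel_le hN (by positivity) ha hab (norm_nonneg _) (norm_nonneg _)
        (by linarith [norm_sub_le_norm_sub_add_norm_sub x y z, norm_sub_rev y z])
    have hnear : 2 ^ (-(d + N)) * a ^ (-d) ≤ polyKernel d N a ‖z - y‖ :=
      two_rpow_neg_mul_rpow_neg_le_polyKernel (by positivity) ha (norm_nonneg _) hz.le
    calc L * a ^ (-d)
        = (2 ^ (-N) * polyKernel d N (a + b) ‖x - y‖) * (2 ^ (-(d + N)) * a ^ (-d)) := by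
          rw [hL, show -(d + 2 * N) = -N + -(d + N) by ring, Real.rpow_add two_pos]
          ring
      _ ≤ polyKernel d N b ‖x - z‖ * polyKernel d N a ‖z - y‖ :=
          mul_le_mul hfar hnear (by positivity) (polyKernel_nonneg (by linarith) (norm_nonneg _))
  calc ENNReal.ofReal L * μ (ball 0 1) = ENNReal.ofReal (L * a ^ (-d)) * μ (ball y a) := by
        rw [Measure.addHaar_ball_of_pos μ y ha, ← mul_assoc,
          ← ENNReal.ofReal_mul hLa, mul_assoc, ← Real.rpow_natCast,
          ← Real.rpow_add ha, neg_add_cancel, Real.rpow_zero, mul_one]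
    _ = ∫⁻ _ in ball y a, ENNReal.ofReal (L * a ^ (-d)) ∂μ := (setLIntegral_const _ _).symm
    _ ≤ ∫⁻ z in ball y a,
          ENNReal.ofReal (polyKernel d N b ‖x - z‖ * polyKernel d N a ‖z - y‖) ∂μ :=
        setLIntegral_mono' measurableSet_ball fun z hz ↦ ENNReal.ofReal_le_ofReal (hpoint z hz)
    _ ≤ _ := setLIntegral_le_lintegral _ _

lemma le_lintegral_polyKernel_mul_polyKernel (hN : 0 ≤ N) {a b : ℝ} (ha : 0 < a) (hb : 0 < b)
    (x y : E) :
    ENNReal.ofReal (2 ^ (-((finrank ℝ E : ℝ) + 2 * N)) *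
        polyKernel (finrank ℝ E) N (a + b) ‖x - y‖) * μ (ball 0 1) ≤
      ∫⁻ z, ENNReal.ofReal
        (polyKernel (finrank ℝ E) N a ‖x - z‖ * polyKernel (finrank ℝ E) N b ‖z - y‖) ∂μ := by
  rcases le_total b a with hba | hab
  · simpa only [add_comm b a] using le_lintegral_polyKernel_mul_polyKernel_of_le μ hN hb hba x y
  · simpa only [norm_sub_rev y, norm_sub_rev _ x, mul_comm (polyKernel _ N b _)]
      using le_lintegral_polyKernel_mul_polyKernel_of_le μ hN ha hab y x

theorem exists_bounds_lintegral_polyKernel_mul_polyKernel (hN : 0 < N) :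
    ∃ c C : ℝ, 0 < c ∧ c ≤ C ∧ ∀ a b : ℝ, 0 < a → 0 < b → ∀ x y : E,
      ENNReal.ofReal (c * polyKernel (finrank ℝ E) N (a + b) ‖x - y‖) ≤
          ∫⁻ z, ENNReal.ofReal
            (polyKernel (finrank ℝ E) N a ‖x - z‖ * polyKernel (finrank ℝ E) N b ‖z - y‖) ∂μ ∧
        ∫⁻ z, ENNReal.ofReal
            (polyKernel (finrank ℝ E) N a ‖x - z‖ * polyKernel (finrank ℝ E) N b ‖z - y‖) ∂μ ≤
          ENNReal.ofReal (C * polyKernel (finrank ℝ E) N (a + b) ‖x - y‖) := by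
  set d : ℝ := (finrank ℝ E : ℝ)
  set I := ∫⁻ z, ENNReal.ofReal (polyKernel d N 1 ‖z‖) ∂μ
  set c : ℝ := 2 ^ (-(d + 2 * N)) * (μ (ball 0 1)).toReal with hc_def
  have hc : 0 < c := mul_pos (by positivity)
    (ENNReal.toReal_pos (measure_ball_pos μ 0 one_pos).ne' measure_ball_lt_top.ne)
  refine ⟨c, max c (2 ^ (d + N) * (2 * I.toReal)), hc, le_max_left _ _,
    fun a b ha hb x y ↦ ?_⟩
  have hK : 0 ≤ polyKernel d N (a + b) ‖x - y‖ := polyKernel_nonneg (by positivity) (norm_nonneg _)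
  refine ⟨?_, ?_⟩
  · calc ENNReal.ofReal (c * polyKernel d N (a + b) ‖x - y‖)
        = ENNReal.ofReal (2 ^ (-(d + 2 * N)) * polyKernel d N (a + b) ‖x - y‖) *
            μ (ball 0 1) := by
          rw [← ENNReal.ofReal_toReal measure_ball_lt_top.ne, ← ENNReal.ofReal_mul (by positivity),
            hc_def]
          ring_nf
      _ ≤ _ := le_lintegral_polyKernel_mul_polyKernel μ hN.le ha hb x y
  · refine (lintegral_polyKernel_mul_polyKernel_le μ hN.le ha hb x y).trans ?_
    rw [← ENNReal.ofReal_toReal (lintegral_polyKernel_one_lt_top μ hN).ne, ← ENNReal.ofReal_ofNat 2,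
      ← ENNReal.ofReal_mul zero_le_two, ← ENNReal.ofReal_mul (by positivity)]
    refine ENNReal.ofReal_le_ofReal ?_
    calc 2 ^ (d + N) * polyKernel d N (a + b) ‖x - y‖ * (2 * I.toReal)
        = 2 ^ (d + N) * (2 * I.toReal) * polyKernel d N (a + b) ‖x - y‖ := by ring
      _ ≤ _ := mul_le_mul_of_nonneg_right (le_max_right _ _) hK

end Integral

theorem composition_of_two_kernels_general
    (d : ℕ) (N : ℝ) (hN : 0 < N) :
    ∃ c C : ℝ, 0 < c ∧ c ≤ C ∧
      ∀ s t : ℝ, 0 < s → s < t → ∀ x y : EuclideanSpace ℝ (Fin d),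
        ENNReal.ofReal (c * (t ^ (-(d : ℝ)) * (t / (t + ‖x - y‖)) ^ ((d : ℝ) + N))) ≤
          (∫⁻ z, ENNReal.ofReal
            ((t - s) ^ (-(d : ℝ)) * ((t - s) / ((t - s) + ‖x - z‖)) ^ ((d : ℝ) + N) *
              (s ^ (-(d : ℝ)) * (s / (s + ‖z - y‖)) ^ ((d : ℝ) + N)))) ∧
        (∫⁻ z, ENNReal.ofReal
            ((t - s) ^ (-(d : ℝ)) * ((t - s) / ((t - s) + ‖x - z‖)) ^ ((d : ℝ) + N) *
              (s ^ (-(d : ℝ)) * (s / (s + ‖z - y‖)) ^ ((d : ℝ) + N)))) ≤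
          ENNReal.ofReal (C * (t ^ (-(d : ℝ)) * (t / (t + ‖x - y‖)) ^ ((d : ℝ) + N))) := by
  obtain ⟨c, C, hc, hcC, hbounds⟩ :=
    exists_bounds_lintegral_polyKernel_mul_polyKernel
      (volume : Measure (EuclideanSpace ℝ (Fin d))) hN
  simp only [finrank_euclideanSpace_fin] at hbounds
  refine ⟨c, C, hc, hcC, fun s t hs hst x y ↦ ?_⟩
  have hts : 0 < t - s := sub_pos.2 hst
  simpa only [sub_add_cancel, rpow_neg_mul_div_rpow_eq_polyKernel hts,
    rpow_neg_mul_div_rpow_eq_polyKernel hs, rpow_neg_mul_div_rpow_eq_polyKernel (hs.trans hst),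
    norm_nonneg] using hbounds (t - s) s hts hs x y

/-- Lemma 4.1 of the paper: two-sided bound for the composition of two heat-kernel-type
profiles: `∫ (t−s)^{−d} ((t−s)/((t−s)+|x−z|))^{d+N} s^{−d} (s/(s+|z−y|))^{d+N} dz ≍
t^{−d} (t/(t+|x−y|))^{d+N}` for `0 < s < t`. -/
theorem composition_of_two_kernels
    (d : ℕ) (hd : 1 ≤ d) (N : ℝ) (hN : 0 < N) :
    ∃ c C : ℝ, 0 < c ∧ c ≤ C ∧
      ∀ s t : ℝ, 0 < s → s < t → ∀ x y : EuclideanSpace ℝ (Fin d),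
        ENNReal.ofReal (c * (t ^ (-(d : ℝ)) * (t / (t + ‖x - y‖)) ^ ((d : ℝ) + N))) ≤
          (∫⁻ z, ENNReal.ofReal
            ((t - s) ^ (-(d : ℝ)) * ((t - s) / ((t - s) + ‖x - z‖)) ^ ((d : ℝ) + N) *
              (s ^ (-(d : ℝ)) * (s / (s + ‖z - y‖)) ^ ((d : ℝ) + N)))) ∧
        (∫⁻ z, ENNReal.ofReal
            ((t - s) ^ (-(d : ℝ)) * ((t - s) / ((t - s) + ‖x - z‖)) ^ ((d : ℝ) + N) *
              (s ^ (-(d : ℝ)) * (s / (s + ‖z - y‖)) ^ ((d : ℝ) + N)))) ≤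
          ENNReal.ofReal (C * (t ^ (-(d : ℝ)) * (t / (t + ‖x - y‖)) ^ ((d : ℝ) + N))) :=
  composition_of_two_kernels_general d N hN
end

section
/- Let d ≥ 1 be an integer, α ∈ (1,2) with α < (d+2)/2, β ∈ ((d+α)/2, d+α), s ∈ (0,1], and let p be a real exponent with max(1, d/β) < p < d/(αs). Define the kernel K(x,y) = |x|^{−αs} · |x−y|^{αs−d} · min(1, |y|/|x−y|)^{β−d} for x, y ∈ ℝ^d with x ≠ 0 and x ≠ y. Then there is a constant C, depending only on d, α, β, s, p, such that for every g ∈ L^p(ℝ^d): ( ∫_{ℝ^d} ( ∫_{ℝ^d} K(x,y) |g(y)| dy )^p dx )^{1/p} ≤ C · ‖g‖_{L^p(ℝ^d)}. -/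
/-!
The kernel `K(x, y) = ‖x‖^(-a) ‖x - y‖^(a - d) min(1, ‖y‖ / ‖x - y‖)^(β - d)`, `a = αs`, is
homogeneous of degree `-d`. Schur's test with the weight `‖x‖^(-d/(pq))`, `1/p + 1/q = 1`,
followed by the rescaling `y = ‖x‖ z`, reduces the `L^p` bound to the finiteness of
`∫ K(ω, y) ‖y‖^(-d/p) dy` and `∫ K(x, ω) ‖x‖^(-d/q) dx`, uniformly over unit vectors `ω`.
Since `min(1, t)^(β - d) ≤ 1 + t^(-c)` for `c = max(d - β, 0)`, both are dominated by integrals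
`∫ ‖z - ω‖^s ‖z‖^t dz` with `s, t > -d` and `s + t < -d`, which are bounded uniformly in `ω`:
the singularities at `ω` and `0` are locally integrable and the decay at infinity is integrable.
All exponent conditions this needs follow from `1 < p` and `0 < a < d/p < β`.
-/

open MeasureTheory Metric Set Module
open scoped ENNReal

section MeasureSpace

variable {X : Type*} [MeasurableSpace X] {μ : Measure X} {p q : ℝ}

theorem lintegral_mul_le_weighted_Lp_mul_Lq (hpq : p.HolderConjugate q) {k h f : X → ℝ≥0∞}
    (hk : AEMeasurable k μ) (hh : AEMeasurable h μ) (hf : AEMeasurable f μ)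
    (hh0 : ∀ᵐ y ∂μ, h y ≠ 0) (hhtop : ∀ᵐ y ∂μ, h y ≠ ∞) :
    ∫⁻ y, k y * f y ∂μ ≤
      (∫⁻ y, k y * h y ^ q ∂μ) ^ (1 / q) * (∫⁻ y, k y * (f y / h y) ^ p ∂μ) ^ (1 / p) := by
  have hp := hpq.pos
  have hq := hpq.symm.pos
  have hsplit : ∀ᵐ y ∂μ, k y * f y = (k y ^ (1 / q) * h y) * (k y ^ (1 / p) * (f y / h y)) := by
    filter_upwards [hh0, hhtop] with y h0 htop
    calc k y * f y = k y ^ (1 / q + 1 / p) * (h y * (h y)⁻¹) * f y := by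
          rw [ENNReal.mul_inv_cancel h0 htop, one_div, one_div, hpq.symm.inv_add_inv_eq_one,
            ENNReal.rpow_one, mul_one]
      _ = _ := by
          rw [ENNReal.rpow_add_of_nonneg _ _ (by positivity) (by positivity),
            ENNReal.div_eq_inv_mul]
          ring
  have hpow : ∀ (r : ℝ) (u v : ℝ≥0∞), 0 < r → (u ^ (1 / r) * v) ^ r = u * v ^ r := by
    intro r u v hr
    rw [ENNReal.mul_rpow_of_nonneg _ _ hr.le, ← ENNReal.rpow_mul, one_div_mul_cancel hr.ne',
      ENNReal.rpow_one]
  calc ∫⁻ y, k y * f y ∂μ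
      = ∫⁻ y, (k y ^ (1 / q) * h y) * (k y ^ (1 / p) * (f y / h y)) ∂μ := lintegral_congr_ae hsplit
    _ ≤ _ := ENNReal.lintegral_mul_le_Lp_mul_Lq μ hpq.symm (by fun_prop) (by fun_prop)
    _ = _ := by simp only [hpow q _ _ hq, hpow p _ _ hp]

theorem lintegral_mul_lintegral_comm [SFinite μ] {K : X → X → ℝ≥0∞}
    (hK : Measurable (Function.uncurry K)) {u v : X → ℝ≥0∞} (hu : Measurable u)
    (hv : AEMeasurable v μ) :
    ∫⁻ x, u x * ∫⁻ y, K x y * v y ∂μ ∂μ = ∫⁻ y, v y * ∫⁻ x, K x y * u x ∂μ ∂μ := by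
  have hF : AEMeasurable (Function.uncurry fun x y => u x * (K x y * v y)) (μ.prod μ) := by
    have := hv.comp_snd (μ := μ)
    fun_prop
  calc ∫⁻ x, u x * ∫⁻ y, K x y * v y ∂μ ∂μ
      = ∫⁻ x, ∫⁻ y, u x * (K x y * v y) ∂μ ∂μ := lintegral_congr fun x =>
        (lintegral_const_mul'' _ (hK.of_uncurry_left.aemeasurable.mul hv)).symm
    _ = ∫⁻ y, ∫⁻ x, u x * (K x y * v y) ∂μ ∂μ := lintegral_lintegral_swap hF
    _ = _ := lintegral_congr fun y => by
        have hKy : Measurable fun x => K x y := hK.of_uncurry_right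
        rw [← lintegral_const_mul _ (by fun_prop : Measurable fun x => K x y * u x)]
        exact lintegral_congr fun x => by ring

theorem lintegral_rpow_lintegral_le_of_schur [SFinite μ] (hpq : p.HolderConjugate q)
    {K : X → X → ℝ≥0∞} {h f : X → ℝ≥0∞} (hK : Measurable (Function.uncurry K))
    (hh : Measurable h) (hh0 : ∀ᵐ x ∂μ, h x ≠ 0) (hhtop : ∀ᵐ x ∂μ, h x ≠ ∞) {A B : ℝ≥0∞}
    (hA : ∀ᵐ x ∂μ, ∫⁻ y, K x y * h y ^ q ∂μ ≤ A * h x ^ q)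
    (hB : ∀ᵐ y ∂μ, ∫⁻ x, K x y * h x ^ p ∂μ ≤ B * h y ^ p) (hf : AEMeasurable f μ) :
    ∫⁻ x, (∫⁻ y, K x y * f y ∂μ) ^ p ∂μ ≤ A ^ (p / q) * B * ∫⁻ y, f y ^ p ∂μ := by
  have hp := hpq.pos
  have hq := hpq.symm.pos
  have hrow : ∀ᵐ x ∂μ, (∫⁻ y, K x y * f y ∂μ) ^ p ≤
      A ^ (p / q) * (h x ^ p * ∫⁻ y, K x y * (f y / h y) ^ p ∂μ) := by
    filter_upwards [hA] with x hx
    calc (∫⁻ y, K x y * f y ∂μ) ^ p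
        ≤ ((∫⁻ y, K x y * h y ^ q ∂μ) ^ (1 / q) * (∫⁻ y, K x y * (f y / h y) ^ p ∂μ) ^ (1 / p))
            ^ p := by
          gcongr
          exact lintegral_mul_le_weighted_Lp_mul_Lq hpq hK.of_uncurry_left.aemeasurable
            hh.aemeasurable hf hh0 hhtop
      _ = (∫⁻ y, K x y * h y ^ q ∂μ) ^ (p / q) * ∫⁻ y, K x y * (f y / h y) ^ p ∂μ := by
          rw [ENNReal.mul_rpow_of_nonneg _ _ hp.le, ← ENNReal.rpow_mul, ← ENNReal.rpow_mul,
            one_div_mul_cancel hp.ne', ENNReal.rpow_one, one_div_mul_eq_div]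
      _ ≤ (A * h x ^ q) ^ (p / q) * ∫⁻ y, K x y * (f y / h y) ^ p ∂μ := by gcongr
      _ = A ^ (p / q) * (h x ^ p * ∫⁻ y, K x y * (f y / h y) ^ p ∂μ) := by
          rw [ENNReal.mul_rpow_of_nonneg _ _ (by positivity), ← ENNReal.rpow_mul,
            mul_div_cancel₀ _ hq.ne', mul_assoc]
  have hcol : ∀ᵐ y ∂μ, (f y / h y) ^ p * (B * h y ^ p) = B * f y ^ p := by
    filter_upwards [hh0, hhtop] with y h0 htop
    rw [mul_left_comm, ← ENNReal.mul_rpow_of_nonneg _ _ hp.le, ENNReal.div_mul_cancel h0 htop]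
  calc ∫⁻ x, (∫⁻ y, K x y * f y ∂μ) ^ p ∂μ
      ≤ ∫⁻ x, A ^ (p / q) * (h x ^ p * ∫⁻ y, K x y * (f y / h y) ^ p ∂μ) ∂μ :=
        lintegral_mono_ae hrow
    _ = A ^ (p / q) * ∫⁻ y, (f y / h y) ^ p * ∫⁻ x, K x y * h x ^ p ∂μ ∂μ := by
        rw [lintegral_const_mul'' _ (by fun_prop),
          lintegral_mul_lintegral_comm hK (by fun_prop) (by fun_prop)]
    _ ≤ A ^ (p / q) * ∫⁻ y, (f y / h y) ^ p * (B * h y ^ p) ∂μ := by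
        gcongr A ^ (p / q) * ?_
        exact lintegral_mono_ae (hB.mono fun y hy => by gcongr)
    _ = A ^ (p / q) * B * ∫⁻ y, f y ^ p ∂μ := by
        rw [lintegral_congr_ae hcol, lintegral_const_mul'' _ (by fun_prop), mul_assoc]

theorem eLpNorm_ofReal_eq_lintegral_rpow {p : ℝ} (hp : 0 < p) (g : X → ℝ) :
    eLpNorm g (ENNReal.ofReal p) μ = (∫⁻ y, ENNReal.ofReal |g y| ^ p ∂μ) ^ (1 / p) := by
  rw [eLpNorm_eq_lintegral_rpow_enorm_toReal (by simpa using hp) ENNReal.ofReal_ne_top,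
    ENNReal.toReal_ofReal hp.le]
  simp only [Real.enorm_eq_ofReal_abs]

end MeasureSpace

theorem ofReal_norm_smul_rpow {E : Type*} [NormedAddCommGroup E] [NormedSpace ℝ E] {r : ℝ}
    (hr : 0 < r) (y : E) (s : ℝ) :
    ENNReal.ofReal (‖r • y‖ ^ s) = ENNReal.ofReal (r ^ s) * ENNReal.ofReal (‖y‖ ^ s) := by
  rw [norm_smul, Real.norm_of_nonneg hr.le, Real.mul_rpow hr.le (norm_nonneg y),
    ENNReal.ofReal_mul (by positivity)]

theorem ofReal_rpow_norm_sub_mul_rpow_norm_le {E : Type*} [NormedAddCommGroup E] {s t : ℝ}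
    (hs : s ≤ 0) (ht : t ≤ 0) {ω : E} (hω : ‖ω‖ = 1) (z : E) :
    ENNReal.ofReal (‖z - ω‖ ^ s * ‖z‖ ^ t) ≤
      ENNReal.ofReal ((1 / 2) ^ t) *
          (ball 0 (1 / 2)).indicator (fun w => ENNReal.ofReal (‖w‖ ^ s)) (z - ω) +
        (ENNReal.ofReal ((1 / 2) ^ s) * (ball 0 2).indicator (fun w => ENNReal.ofReal (‖w‖ ^ t)) z +
          ENNReal.ofReal ((1 / 2) ^ s) *
            (ball 0 2)ᶜ.indicator (fun w => ENNReal.ofReal (‖w‖ ^ (s + t))) z) := by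
  have hzω : |‖z‖ - 1| ≤ ‖z - ω‖ := hω ▸ abs_norm_sub_norm_le z ω
  by_cases hnear : ‖z - ω‖ < 1 / 2
  · refine le_add_right ?_
    have hz : 1 / 2 ≤ ‖z‖ := by linarith [abs_le.1 hzω]
    rw [indicator_of_mem (mem_ball_zero_iff.2 hnear), ← ENNReal.ofReal_mul (by positivity),
      mul_comm]
    exact ENNReal.ofReal_le_ofReal (mul_le_mul_of_nonneg_right
      (Real.rpow_le_rpow_of_nonpos (by norm_num) hz ht) (by positivity))
  refine le_add_left ?_
  have hfar : 1 / 2 ≤ ‖z - ω‖ := not_lt.1 hnear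
  by_cases hball : ‖z‖ < 2
  · refine le_add_right ?_
    rw [indicator_of_mem (mem_ball_zero_iff.2 hball), ← ENNReal.ofReal_mul (by positivity)]
    exact ENNReal.ofReal_le_ofReal (mul_le_mul_of_nonneg_right
      (Real.rpow_le_rpow_of_nonpos (by norm_num) hfar hs) (by positivity))
  · refine le_add_left ?_
    have hz : 0 < ‖z‖ := by linarith [not_lt.1 hball]
    have hhalf : 1 / 2 * ‖z‖ ≤ ‖z - ω‖ := by linarith [abs_le.1 hzω]
    rw [indicator_of_mem (by simpa using hball : z ∈ (ball 0 2)ᶜ),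
      ← ENNReal.ofReal_mul (by positivity), Real.rpow_add hz, ← mul_assoc,
      ← Real.mul_rpow (by norm_num) hz.le]
    exact ENNReal.ofReal_le_ofReal (mul_le_mul_of_nonneg_right
      (Real.rpow_le_rpow_of_nonpos (by positivity) hhalf hs) (by positivity))

theorem min_one_rpow_le_one_add_rpow {u e c : ℝ} (hu : 0 ≤ u) (hec : -c ≤ e) :
    min 1 u ^ e ≤ 1 + u ^ (-c) := by
  have hpos : 0 ≤ u ^ (-c) := by positivity
  rcases le_or_gt 0 e with he | he
  · linarith [Real.rpow_le_one (le_min zero_le_one hu) (min_le_left 1 u) he]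
  rcases le_or_gt 1 u with hu1 | hu1
  · rw [min_eq_left hu1, Real.one_rpow]; linarith
  rw [min_eq_right hu1.le]
  rcases hu.eq_or_lt with rfl | hu0
  · rw [Real.zero_rpow he.ne]; linarith
  linarith [Real.rpow_le_rpow_of_exponent_ge hu0 hu1.le hec]

section Kernel

variable {E : Type*} [NormedAddCommGroup E]

noncomputable def hardyRieszKernel (d a β : ℝ) (x y : E) : ℝ :=
  ‖x‖ ^ (-a) * ‖x - y‖ ^ (a - d) * min 1 (‖y‖ / ‖x - y‖) ^ (β - d)

theorem hardyRieszKernel_nonneg (d a β : ℝ) (x y : E) : 0 ≤ hardyRieszKernel d a β x y := by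
  unfold hardyRieszKernel
  have : 0 ≤ min 1 (‖y‖ / ‖x - y‖) := le_min zero_le_one (by positivity)
  positivity

theorem hardyRieszKernel_smul [NormedSpace ℝ E] (d a β : ℝ) {r : ℝ} (hr : 0 < r) (x y : E) :
    hardyRieszKernel d a β (r • x) (r • y) = r ^ (-d) * hardyRieszKernel d a β x y := by
  unfold hardyRieszKernel
  rw [← smul_sub, norm_smul, norm_smul, norm_smul, Real.norm_of_nonneg hr.le,
    mul_div_mul_left _ _ hr.ne', Real.mul_rpow hr.le (norm_nonneg _),
    Real.mul_rpow hr.le (norm_nonneg _), show -d = -a + (a - d) by ring, Real.rpow_add hr]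
  ring

theorem hardyRieszKernel_le {d a β c : ℝ} (hβc : d - β ≤ c) (hacd : a + c < d)
    (x y : E) :
    hardyRieszKernel d a β x y ≤
      ‖x‖ ^ (-a) * ‖x - y‖ ^ (a - d) + ‖x‖ ^ (-a) * ‖x - y‖ ^ (a + c - d) * ‖y‖ ^ (-c) := by
  have hsplit :
      ‖x - y‖ ^ (a + c - d) * ‖y‖ ^ (-c) = ‖x - y‖ ^ (a - d) * (‖y‖ / ‖x - y‖) ^ (-c) := by
    rw [Real.div_rpow (norm_nonneg _) (norm_nonneg _), Real.rpow_neg (norm_nonneg (x - y)),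
      div_inv_eq_mul, show a + c - d = (a - d) + c by ring,
      Real.rpow_add' (norm_nonneg _) (by linarith)]
    ring
  calc hardyRieszKernel d a β x y
      ≤ ‖x‖ ^ (-a) * ‖x - y‖ ^ (a - d) * (1 + (‖y‖ / ‖x - y‖) ^ (-c)) := by
        unfold hardyRieszKernel
        gcongr
        exact min_one_rpow_le_one_add_rpow (by positivity) (by linarith)
    _ = _ := by rw [mul_assoc _ _ (‖y‖ ^ (-c)), hsplit]; ring

end Kernel

section HaarMeasure

variable {E : Type*} [NormedAddCommGroup E] [NormedSpace ℝ E] [MeasurableSpace E] [BorelSpace E]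
  [FiniteDimensional ℝ E] {μ : Measure E} [μ.IsAddHaarMeasure]

theorem lintegral_eq_mul_lintegral_comp_smul (f : E → ℝ≥0∞) {r : ℝ} (hr : 0 < r) :
    ∫⁻ x, f x ∂μ = ENNReal.ofReal (r ^ finrank ℝ E) * ∫⁻ x, f (r • x) ∂μ := by
  have hmap := lintegral_map_equiv (μ := μ) f (MeasurableEquiv.smul₀ r hr.ne')
  rw [MeasurableEquiv.coe_smul₀, Measure.map_addHaar_smul μ hr.ne', lintegral_smul_measure] at hmap
  rw [← hmap, smul_eq_mul, ← mul_assoc, ← ENNReal.ofReal_mul (by positivity),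
    abs_of_pos (by positivity), mul_inv_cancel₀ (by positivity), ENNReal.ofReal_one, one_mul]

theorem lintegral_mul_rpow_norm_le_of_homogeneous {Φ : E → E → ℝ≥0∞}
    (hΦ : ∀ r : ℝ, 0 < r → ∀ x y,
      Φ (r • x) (r • y) = ENNReal.ofReal (r ^ (-(finrank ℝ E : ℝ))) * Φ x y)
    {s : ℝ} {A : ℝ≥0∞} (hA : ∀ ω : E, ‖ω‖ = 1 → ∫⁻ y, Φ ω y * ENNReal.ofReal (‖y‖ ^ (-s)) ∂μ ≤ A)
    {x : E} (hx : x ≠ 0) :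
    ∫⁻ y, Φ x y * ENNReal.ofReal (‖y‖ ^ (-s)) ∂μ ≤ A * ENNReal.ofReal (‖x‖ ^ (-s)) := by
  set R := ‖x‖
  have hR : 0 < R := norm_pos_iff.2 hx
  have hω : ‖R⁻¹ • x‖ = 1 := by rw [norm_smul, norm_inv, norm_norm, inv_mul_cancel₀ hR.ne']
  have hxω : R • R⁻¹ • x = x := by rw [smul_smul, mul_inv_cancel₀ hR.ne', one_smul]
  have hscale :
      ENNReal.ofReal (R ^ finrank ℝ E) * ENNReal.ofReal (R ^ (-(finrank ℝ E : ℝ))) = 1 := by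
    rw [← ENNReal.ofReal_mul (by positivity), Real.rpow_neg hR.le, Real.rpow_natCast,
      mul_inv_cancel₀ (by positivity), ENNReal.ofReal_one]
  calc ∫⁻ y, Φ x y * ENNReal.ofReal (‖y‖ ^ (-s)) ∂μ
      = ENNReal.ofReal (R ^ finrank ℝ E) *
          ∫⁻ y, Φ (R • R⁻¹ • x) (R • y) * ENNReal.ofReal (‖R • y‖ ^ (-s)) ∂μ := by
        rw [hxω]; exact lintegral_eq_mul_lintegral_comp_smul _ hR
    _ = ENNReal.ofReal (R ^ (-s)) * ∫⁻ y, Φ (R⁻¹ • x) y * ENNReal.ofReal (‖y‖ ^ (-s)) ∂μ := by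
        simp_rw [hΦ R hR, ofReal_norm_smul_rpow hR]
        rw [← lintegral_const_mul' _ _ ENNReal.ofReal_ne_top,
          ← lintegral_const_mul' _ _ ENNReal.ofReal_ne_top]
        refine lintegral_congr fun y => ?_
        calc _ = ENNReal.ofReal (R ^ finrank ℝ E) * ENNReal.ofReal (R ^ (-(finrank ℝ E : ℝ))) *
              (ENNReal.ofReal (R ^ (-s)) * (Φ (R⁻¹ • x) y * ENNReal.ofReal (‖y‖ ^ (-s)))) := by ring
          _ = _ := by rw [hscale, one_mul]
    _ ≤ ENNReal.ofReal (R ^ (-s)) * A := by gcongr; exact hA _ hω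
    _ = A * ENNReal.ofReal (R ^ (-s)) := mul_comm _ _

theorem lintegral_rpow_lintegral_le_of_homogeneous [Nontrivial E] {p q : ℝ}
    (hpq : p.HolderConjugate q) {K : E → E → ℝ≥0∞} (hK : Measurable (Function.uncurry K))
    (hKhom : ∀ r : ℝ, 0 < r → ∀ x y,
      K (r • x) (r • y) = ENNReal.ofReal (r ^ (-(finrank ℝ E : ℝ))) * K x y)
    {A B : ℝ≥0∞}
    (hA : ∀ ω : E, ‖ω‖ = 1 →
      ∫⁻ y, K ω y * ENNReal.ofReal (‖y‖ ^ (-(finrank ℝ E / p))) ∂μ ≤ A)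
    (hB : ∀ ω : E, ‖ω‖ = 1 →
      ∫⁻ x, K x ω * ENNReal.ofReal (‖x‖ ^ (-(finrank ℝ E / q))) ∂μ ≤ B)
    {f : E → ℝ≥0∞} (hf : AEMeasurable f μ) :
    ∫⁻ x, (∫⁻ y, K x y * f y ∂μ) ^ p ∂μ ≤ A ^ (p / q) * B * ∫⁻ y, f y ^ p ∂μ := by
  set d : ℝ := (finrank ℝ E : ℝ)
  have hp := hpq.pos
  have hq := hpq.symm.pos
  set h : E → ℝ≥0∞ := fun x => ENNReal.ofReal (‖x‖ ^ (-(d / (p * q))))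
  have hpow : ∀ {t : ℝ}, 0 < t → ∀ x, h x ^ t = ENNReal.ofReal (‖x‖ ^ (-(d / (p * q / t)))) := by
    intro t ht x
    rw [ENNReal.ofReal_rpow_of_nonneg (by positivity) ht.le, ← Real.rpow_mul (norm_nonneg x)]
    congr 2
    field_simp
  have hhq : ∀ x, h x ^ q = ENNReal.ofReal (‖x‖ ^ (-(d / p))) := fun x => by
    rw [hpow hq, mul_div_cancel_right₀ _ hq.ne']
  have hhp : ∀ x, h x ^ p = ENNReal.ofReal (‖x‖ ^ (-(d / q))) := fun x => by
    rw [hpow hp, mul_div_cancel_left₀ _ hp.ne']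
  refine lintegral_rpow_lintegral_le_of_schur (h := h) hpq hK (by fun_prop) ?_
    (ae_of_all _ fun _ => ENNReal.ofReal_ne_top) ?_ ?_ hf
  · filter_upwards [Measure.ae_ne μ 0] with x hx
    exact (ENNReal.ofReal_pos.2 (Real.rpow_pos_of_pos (norm_pos_iff.2 hx) _)).ne'
  · filter_upwards [Measure.ae_ne μ 0] with x hx
    simp only [hhq]
    exact lintegral_mul_rpow_norm_le_of_homogeneous hKhom hA hx
  · filter_upwards [Measure.ae_ne μ 0] with y hy
    simp only [hhp]
    exact lintegral_mul_rpow_norm_le_of_homogeneous (Φ := fun y x => K x y)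
      (fun r hr y x => hKhom r hr x y) hB hy

theorem lintegral_ball_rpow_norm_lt_top (hd : 1 ≤ finrank ℝ E) {t : ℝ}
    (ht : -(finrank ℝ E : ℝ) < t) (r : ℝ) :
    ∫⁻ x in ball 0 r, ENNReal.ofReal (‖x‖ ^ t) ∂μ < ∞ := by
  refine Integrable.lintegral_lt_top (integrableOn_ball_of_norm_le_rpow hd (C := 1) (α := -t)
    (by linarith) (ae_of_all _ fun x => ?_) (measurable_norm.pow_const t).aestronglyMeasurable)
  rw [neg_neg, one_mul, Real.norm_of_nonneg (by positivity)]

theorem lintegral_compl_ball_rpow_norm_lt_top {t : ℝ} (ht : t < -(finrank ℝ E : ℝ)) {r : ℝ}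
    (hr : 0 < r) : ∫⁻ x in (ball 0 r)ᶜ, ENNReal.ofReal (‖x‖ ^ t) ∂μ < ∞ := by
  have ht0 : t < 0 := ht.trans_le (by simp)
  set C := (1 + r⁻¹) ^ (-t)
  have hbound : ∀ x ∈ (ball (0 : E) r)ᶜ, ENNReal.ofReal (‖x‖ ^ t) ≤
      ENNReal.ofReal C * ENNReal.ofReal ((1 + ‖x‖) ^ (-(-t))) := by
    intro x hx
    have hrx : r ≤ ‖x‖ := by simpa using hx
    have hx0 : 0 < ‖x‖ := hr.trans_le hrx
    rw [← ENNReal.ofReal_mul (by positivity), neg_neg]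
    refine ENNReal.ofReal_le_ofReal ?_
    have h1 : 1 + ‖x‖ ≤ (1 + r⁻¹) * ‖x‖ := by
      rw [add_mul, one_mul, inv_mul_eq_div, add_comm]
      gcongr
      rwa [one_le_div hr]
    calc ‖x‖ ^ t = (1 + r⁻¹) ^ (-t) * ((1 + r⁻¹) * ‖x‖) ^ t := by
          rw [Real.mul_rpow (by positivity) hx0.le, ← mul_assoc, ← Real.rpow_add (by positivity),
            neg_add_cancel, Real.rpow_zero, one_mul]
      _ ≤ C * (1 + ‖x‖) ^ t :=
          mul_le_mul_of_nonneg_left (Real.rpow_le_rpow_of_nonpos (by positivity) h1 ht0.le)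
            (by positivity)
  calc ∫⁻ x in (ball 0 r)ᶜ, ENNReal.ofReal (‖x‖ ^ t) ∂μ
      ≤ ∫⁻ x in (ball 0 r)ᶜ, ENNReal.ofReal C * ENNReal.ofReal ((1 + ‖x‖) ^ (-(-t))) ∂μ :=
        setLIntegral_mono (by fun_prop) hbound
    _ ≤ ENNReal.ofReal C * ∫⁻ x, ENNReal.ofReal ((1 + ‖x‖) ^ (-(-t))) ∂μ := by
        rw [← lintegral_const_mul' _ _ ENNReal.ofReal_ne_top]
        exact setLIntegral_le_lintegral _ _
    _ < ∞ := ENNReal.mul_lt_top ENNReal.ofReal_lt_top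
        (finite_integral_one_add_norm (by linarith))

theorem exists_lintegral_rpow_norm_sub_mul_rpow_norm_le {s t : ℝ}
    (hs : -(finrank ℝ E : ℝ) < s) (ht : -(finrank ℝ E : ℝ) < t)
    (hst : s + t < -(finrank ℝ E : ℝ)) :
    ∃ M : ℝ≥0∞, M ≠ ∞ ∧
      ∀ ω : E, ‖ω‖ = 1 → ∫⁻ z, ENNReal.ofReal (‖z - ω‖ ^ s * ‖z‖ ^ t) ∂μ ≤ M := by
  have hd : 1 ≤ finrank ℝ E := by
    have : (0 : ℝ) < finrank ℝ E := by linarith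
    exact_mod_cast this
  set g : ℝ → E → ℝ≥0∞ := fun e w => ENNReal.ofReal (‖w‖ ^ e)
  have hg : ∀ e, Measurable (g e) := fun e => by fun_prop
  have hsmall : MeasurableSet (ball (0 : E) (1 / 2)) := measurableSet_ball
  have hbig : MeasurableSet (ball (0 : E) 2) := measurableSet_ball
  have hout : MeasurableSet (ball (0 : E) 2)ᶜ := hbig.compl
  refine ⟨ENNReal.ofReal ((1 / 2) ^ t) * ∫⁻ w in ball 0 (1 / 2), g s w ∂μ +
    (ENNReal.ofReal ((1 / 2) ^ s) * ∫⁻ w in ball 0 2, g t w ∂μ +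
      ENNReal.ofReal ((1 / 2) ^ s) * ∫⁻ w in (ball 0 2)ᶜ, g (s + t) w ∂μ), ?_, fun ω hω => ?_⟩
  · have h1 := lintegral_ball_rpow_norm_lt_top (μ := μ) hd hs (1 / 2)
    have h2 := lintegral_ball_rpow_norm_lt_top (μ := μ) hd ht 2
    have h3 := lintegral_compl_ball_rpow_norm_lt_top (μ := μ) hst two_pos
    finiteness
  calc ∫⁻ z, ENNReal.ofReal (‖z - ω‖ ^ s * ‖z‖ ^ t) ∂μ
      ≤ ∫⁻ z, (ENNReal.ofReal ((1 / 2) ^ t) * (ball 0 (1 / 2)).indicator (g s) (z - ω) +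
          (ENNReal.ofReal ((1 / 2) ^ s) * (ball 0 2).indicator (g t) z +
            ENNReal.ofReal ((1 / 2) ^ s) * (ball 0 2)ᶜ.indicator (g (s + t)) z)) ∂μ :=
        lintegral_mono fun z =>
          ofReal_rpow_norm_sub_mul_rpow_norm_le (by linarith) (by linarith) hω z
    _ = _ := by
        rw [lintegral_add_left (by fun_prop), lintegral_add_left (by fun_prop),
          lintegral_const_mul _ (by fun_prop), lintegral_const_mul _ (by fun_prop),
          lintegral_const_mul _ (by fun_prop), lintegral_sub_right_eq_self _ ω,
          lintegral_indicator hsmall, lintegral_indicator hbig, lintegral_indicator hout]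

theorem exists_lintegral_hardyRieszKernel_sphere_fst_le {a β c γ : ℝ} (ha : 0 < a)
    (hc : 0 ≤ c) (hβc : finrank ℝ E - β ≤ c) (haγ : a < γ) (hcγ : c + γ < finrank ℝ E) :
    ∃ A : ℝ≥0∞, A ≠ ∞ ∧ ∀ ω : E, ‖ω‖ = 1 →
      ∫⁻ y, ENNReal.ofReal (hardyRieszKernel (finrank ℝ E) a β ω y) *
        ENNReal.ofReal (‖y‖ ^ (-γ)) ∂μ ≤ A := by
  set d : ℝ := (finrank ℝ E : ℝ)
  obtain ⟨M₁, hM₁, hM₁ω⟩ := exists_lintegral_rpow_norm_sub_mul_rpow_norm_le (μ := μ)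
    (s := a - d) (t := -γ) (by linarith) (by linarith) (by linarith)
  obtain ⟨M₂, hM₂, hM₂ω⟩ := exists_lintegral_rpow_norm_sub_mul_rpow_norm_le (μ := μ)
    (s := a + c - d) (t := -(c + γ)) (by linarith) (by linarith) (by linarith)
  refine ⟨M₁ + M₂, ENNReal.add_ne_top.2 ⟨hM₁, hM₂⟩, fun ω hω => ?_⟩
  have hbound : ∀ y, ENNReal.ofReal (hardyRieszKernel d a β ω y) * ENNReal.ofReal (‖y‖ ^ (-γ)) ≤
      ENNReal.ofReal (‖y - ω‖ ^ (a - d) * ‖y‖ ^ (-γ)) +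
        ENNReal.ofReal (‖y - ω‖ ^ (a + c - d) * ‖y‖ ^ (-(c + γ))) := by
    intro y
    rw [← ENNReal.ofReal_mul (hardyRieszKernel_nonneg _ _ _ _ _)]
    refine (ENNReal.ofReal_le_ofReal ?_).trans ENNReal.ofReal_add_le
    rw [norm_sub_rev y ω, neg_add, Real.rpow_add' (norm_nonneg y) (by linarith), ← mul_assoc,
      ← add_mul]
    have := hardyRieszKernel_le (d := d) (a := a) (β := β) hβc (by linarith) ω y
    rw [hω, Real.one_rpow, one_mul, one_mul] at this
    gcongr
  calc _ ≤ ∫⁻ y, (ENNReal.ofReal (‖y - ω‖ ^ (a - d) * ‖y‖ ^ (-γ)) +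
        ENNReal.ofReal (‖y - ω‖ ^ (a + c - d) * ‖y‖ ^ (-(c + γ)))) ∂μ := lintegral_mono hbound
    _ ≤ M₁ + M₂ := by
        rw [lintegral_add_left (by fun_prop)]
        exact add_le_add (hM₁ω ω hω) (hM₂ω ω hω)

theorem exists_lintegral_hardyRieszKernel_sphere_snd_le {a β c δ : ℝ} (ha : 0 < a)
    (hc : 0 ≤ c) (hβc : finrank ℝ E - β ≤ c) (hcδ : c < δ) (haδ : a + δ < finrank ℝ E) :
    ∃ B : ℝ≥0∞, B ≠ ∞ ∧ ∀ ω : E, ‖ω‖ = 1 →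
      ∫⁻ x, ENNReal.ofReal (hardyRieszKernel (finrank ℝ E) a β x ω) *
        ENNReal.ofReal (‖x‖ ^ (-δ)) ∂μ ≤ B := by
  set d : ℝ := (finrank ℝ E : ℝ)
  obtain ⟨M₁, hM₁, hM₁ω⟩ := exists_lintegral_rpow_norm_sub_mul_rpow_norm_le (μ := μ)
    (s := a - d) (t := -(a + δ)) (by linarith) (by linarith) (by linarith)
  obtain ⟨M₂, hM₂, hM₂ω⟩ := exists_lintegral_rpow_norm_sub_mul_rpow_norm_le (μ := μ)
    (s := a + c - d) (t := -(a + δ)) (by linarith) (by linarith) (by linarith)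
  refine ⟨M₁ + M₂, ENNReal.add_ne_top.2 ⟨hM₁, hM₂⟩, fun ω hω => ?_⟩
  have hbound : ∀ x, ENNReal.ofReal (hardyRieszKernel d a β x ω) * ENNReal.ofReal (‖x‖ ^ (-δ)) ≤
      ENNReal.ofReal (‖x - ω‖ ^ (a - d) * ‖x‖ ^ (-(a + δ))) +
        ENNReal.ofReal (‖x - ω‖ ^ (a + c - d) * ‖x‖ ^ (-(a + δ))) := by
    intro x
    rw [← ENNReal.ofReal_mul (hardyRieszKernel_nonneg _ _ _ _ _)]
    refine (ENNReal.ofReal_le_ofReal ?_).trans ENNReal.ofReal_add_le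
    have := hardyRieszKernel_le (d := d) (a := a) (β := β) hβc (by linarith) x ω
    rw [hω, Real.one_rpow, mul_one] at this
    calc _ ≤ (‖x‖ ^ (-a) * ‖x - ω‖ ^ (a - d) + ‖x‖ ^ (-a) * ‖x - ω‖ ^ (a + c - d)) *
          ‖x‖ ^ (-δ) := by gcongr
      _ = _ := by
          rw [neg_add, Real.rpow_add' (norm_nonneg x) (by linarith)]
          ring
  calc _ ≤ ∫⁻ x, (ENNReal.ofReal (‖x - ω‖ ^ (a - d) * ‖x‖ ^ (-(a + δ))) +
        ENNReal.ofReal (‖x - ω‖ ^ (a + c - d) * ‖x‖ ^ (-(a + δ)))) ∂μ := lintegral_mono hbound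
    _ ≤ M₁ + M₂ := by
        rw [lintegral_add_left (by fun_prop)]
        exact add_le_add (hM₁ω ω hω) (hM₂ω ω hω)

theorem exists_lintegral_rpow_lintegral_hardyRieszKernel_le [Nontrivial E] {a β p : ℝ}
    (hp : 1 < p) (ha : 0 < a) (hap : a < finrank ℝ E / p) (hβp : finrank ℝ E / p < β) :
    ∃ C : ℝ≥0∞, C ≠ ∞ ∧ ∀ f : E → ℝ≥0∞, AEMeasurable f μ →
      ∫⁻ x, (∫⁻ y, ENNReal.ofReal (hardyRieszKernel (finrank ℝ E) a β x y) * f y ∂μ) ^ p ∂μ ≤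
        C * ∫⁻ y, f y ^ p ∂μ := by
  set d : ℝ := (finrank ℝ E : ℝ)
  have hd : 0 < d := by simpa [d] using finrank_pos (R := ℝ) (M := E)
  set q := p.conjExponent
  have hpq : p.HolderConjugate q := .conjExponent hp
  have hdq : d / q = d - d / p := by
    rw [div_eq_mul_inv, div_eq_mul_inv, show q⁻¹ = 1 - p⁻¹ by linarith [hpq.inv_add_inv_eq_one]]
    ring
  have hdp : d / p < d := div_lt_self hd hp
  -- `c ≥ 0` keeps the singularity of `‖x - y‖ ^ (a + c - d)` at `y = x` integrable.
  set c := max (d - β) 0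
  have hc : c < d - d / p := max_lt (by linarith) (by linarith)
  obtain ⟨A, hA, hAω⟩ := exists_lintegral_hardyRieszKernel_sphere_fst_le (μ := μ) (β := β)
    (c := c) (γ := d / p) ha (le_max_right _ _) (le_max_left _ _) hap (by linarith)
  obtain ⟨B, hB, hBω⟩ := exists_lintegral_hardyRieszKernel_sphere_snd_le (μ := μ) (β := β)
    (c := c) (δ := d / q) ha (le_max_right _ _) (le_max_left _ _) (by linarith) (by linarith)
  refine ⟨A ^ (p / q) * B,
    ENNReal.mul_ne_top (ENNReal.rpow_ne_top_of_nonneg (div_pos hpq.pos hpq.symm.pos).le hA) hB,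
    fun f hf => ?_⟩
  refine lintegral_rpow_lintegral_le_of_homogeneous hpq ?_ (fun r hr x y => ?_) hAω hBω hf
  · unfold hardyRieszKernel
    fun_prop
  · rw [hardyRieszKernel_smul _ _ _ hr, ENNReal.ofReal_mul (by positivity)]

end HaarMeasure

theorem generalized_hardy_kernel_bounded_general
    (d : ℕ) (hd : 1 ≤ d) (α β s p : ℝ)
    (hα1 : 1 < α)
    (hβ1 : ((d : ℝ) + α) / 2 < β)
    (hs1 : 0 < s)
    (hp1 : max 1 ((d : ℝ) / β) < p) (hp2 : p < (d : ℝ) / (α * s)) :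
    ∃ C : ℝ, 0 < C ∧
      ∀ g : EuclideanSpace ℝ (Fin d) → ℝ, MemLp g (ENNReal.ofReal p) volume →
        (∫⁻ x, (∫⁻ y, ENNReal.ofReal
            (‖x‖ ^ (-(α * s)) * ‖x - y‖ ^ (α * s - d) *
              min 1 (‖y‖ / ‖x - y‖) ^ (β - d) * |g y|)) ^ p) ^ (1 / p)
          ≤ ENNReal.ofReal C * eLpNorm g (ENNReal.ofReal p) volume := by
  have : Nonempty (Fin d) := ⟨⟨0, hd⟩⟩
  have hp : 1 < p := (le_max_left _ _).trans_lt hp1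
  have hp0 : 0 < p := by linarith
  have has : 0 < α * s := mul_pos (by linarith) hs1
  have hβ : 0 < β := by linarith [(Nat.cast_nonneg d : (0 : ℝ) ≤ d)]
  obtain ⟨C, hC, hT⟩ := exists_lintegral_rpow_lintegral_hardyRieszKernel_le
    (E := EuclideanSpace ℝ (Fin d)) (μ := volume) (β := β) hp has
    (by rw [finrank_euclideanSpace_fin, lt_div_iff₀ hp0, mul_comm]; exact (lt_div_iff₀ has).1 hp2)
    (by rw [finrank_euclideanSpace_fin, div_lt_iff₀ hp0, mul_comm]
        exact (div_lt_iff₀ hβ).1 ((le_max_right _ _).trans_lt hp1))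
  simp only [finrank_euclideanSpace_fin] at hT
  refine ⟨(C ^ (1 / p)).toReal + 1, by positivity, fun g hg => ?_⟩
  calc _ = (∫⁻ x, (∫⁻ y, ENNReal.ofReal (hardyRieszKernel d (α * s) β x y) *
          ENNReal.ofReal |g y|) ^ p) ^ (1 / p) := by
        simp_rw [← ENNReal.ofReal_mul (hardyRieszKernel_nonneg _ _ _ _ _)]
        rfl
    _ ≤ (C * ∫⁻ y, ENNReal.ofReal |g y| ^ p) ^ (1 / p) := by
        gcongr
        exact hT _ hg.1.aemeasurable.abs.ennreal_ofReal
    _ = C ^ (1 / p) * eLpNorm g (ENNReal.ofReal p) volume := by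
        rw [eLpNorm_ofReal_eq_lintegral_rpow hp0, ENNReal.mul_rpow_of_nonneg _ _ (by positivity)]
    _ ≤ ENNReal.ofReal ((C ^ (1 / p)).toReal + 1) * eLpNorm g (ENNReal.ofReal p) volume := by
        gcongr
        exact (ENNReal.le_ofReal_iff_toReal_le (ENNReal.rpow_ne_top_of_nonneg (by positivity) hC)
          (by positivity)).2 (by linarith)

/-- The generalized Hardy inequality (Theorem 1.5 of the paper) in kernel form: the operator
with kernel `K(x,y) = |x|^{−αs} |x−y|^{αs−d} min(1,|y|/|x−y|)^{β−d}` is bounded on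
`L^p(ℝ^d)` for `max(1, d/β) < p < d/(αs)`. -/
theorem generalized_hardy_kernel_bounded
    (d : ℕ) (hd : 1 ≤ d) (α β s p : ℝ)
    (hα1 : 1 < α) (hα2 : α < 2) (hα3 : α < ((d : ℝ) + 2) / 2)
    (hβ1 : ((d : ℝ) + α) / 2 < β) (hβ2 : β < (d : ℝ) + α)
    (hs1 : 0 < s) (hs2 : s ≤ 1)
    (hp1 : max 1 ((d : ℝ) / β) < p) (hp2 : p < (d : ℝ) / (α * s)) :
    ∃ C : ℝ, 0 < C ∧
      ∀ g : EuclideanSpace ℝ (Fin d) → ℝ, MemLp g (ENNReal.ofReal p) volume →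
        (∫⁻ x, (∫⁻ y, ENNReal.ofReal
            (‖x‖ ^ (-(α * s)) * ‖x - y‖ ^ (α * s - d) *
              min 1 (‖y‖ / ‖x - y‖) ^ (β - d) * |g y|)) ^ p) ^ (1 / p)
          ≤ ENNReal.ofReal C * eLpNorm g (ENNReal.ofReal p) volume :=
  generalized_hardy_kernel_bounded_general d hd α β s p hα1 hβ1 hs1 hp1 hp2
end

section
/- Let d ≥ 1 be an integer, let σ > 0, and let p ∈ (1, ∞) be a real exponent. Then there is a constant C, depending only on d, σ, p, such that for every g ∈ L^p(ℝ^d): ( ∫_{ℝ^d} ( ∫_{{y : |x−y| > min(|x|,|y|)/2}} |x−y|^{−d−σ} · |y|^{σ} · |g(y)| dy )^p dx )^{1/p} ≤ C · ‖g‖_{L^p(ℝ^d)}. -/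
/-!
Schur's test with the power weight `w(y) = |y|^{-t}`, for a suitable small `t > 0`. On the
support of the kernel `max(|x|, |y|) < 3 |x - y|`, so the kernel is dominated by
`3^{d+σ} max(|x|, |y|)^{-d-σ} |y|^σ`. Integrals of `max(R, |z|)^{-b} |z|^a` scale like
`R^{d+a-b}` and are finite for `-d < a < b - d` (polar coordinates), which gives both Schur
bounds `∫ K(x,y) |y|^{-tq} dy ≲ |x|^{-tq}` and `∫ K(x,y) |x|^{-tp} dx ≲ |y|^{-tp}`.
-/

open MeasureTheory ENNReal Function Set Module

section Schur

variable {α : Type*} [MeasurableSpace α] {μ : Measure α}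

theorem lintegral_mul_rpow_le_weighted {p q : ℝ} (hpq : p.HolderConjugate q)
    {k f w : α → ℝ≥0∞} (hk : AEMeasurable k μ) (hf : AEMeasurable f μ) (hw : AEMeasurable w μ)
    (hw0 : ∀ᵐ y ∂μ, w y ≠ 0) (hwtop : ∀ᵐ y ∂μ, w y ≠ ∞) :
    (∫⁻ y, k y * f y ∂μ) ^ p ≤
      (∫⁻ y, k y * w y ^ q ∂μ) ^ (p / q) * ∫⁻ y, k y * f y ^ p * w y ^ (-p) ∂μ := by
  have hp := hpq.pos
  have hq := hpq.symm.pos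
  have hsplit : (fun y => k y * f y) =ᵐ[μ]
      (fun y => (k y * f y ^ p * w y ^ (-p)) ^ p⁻¹ * (k y * w y ^ q) ^ q⁻¹) := by
    filter_upwards [hw0, hwtop] with y h0 htop
    have hk : k y ^ p⁻¹ * k y ^ q⁻¹ = k y := by
      rw [← ENNReal.rpow_add_of_nonneg _ _ (inv_nonneg.2 hp.le) (inv_nonneg.2 hq.le),
        hpq.inv_add_inv_eq_one, ENNReal.rpow_one]
    have hw : (w y ^ (-p)) ^ p⁻¹ * (w y ^ q) ^ q⁻¹ = 1 := by
      rw [← ENNReal.rpow_mul, ENNReal.rpow_rpow_inv hq.ne', neg_mul, mul_inv_cancel₀ hp.ne',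
        ENNReal.rpow_neg_one, ENNReal.inv_mul_cancel h0 htop]
    simp only [ENNReal.mul_rpow_of_nonneg _ _ (inv_nonneg.2 hp.le),
      ENNReal.mul_rpow_of_nonneg _ _ (inv_nonneg.2 hq.le), ENNReal.rpow_rpow_inv hp.ne']
    calc k y * f y = k y ^ p⁻¹ * k y ^ q⁻¹ * f y *
          ((w y ^ (-p)) ^ p⁻¹ * (w y ^ q) ^ q⁻¹) := by rw [hk, hw, mul_one]
      _ = _ := by ring
  calc (∫⁻ y, k y * f y ∂μ) ^ p
      = (∫⁻ y, ((fun y => (k y * f y ^ p * w y ^ (-p)) ^ p⁻¹) *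
          fun y => (k y * w y ^ q) ^ q⁻¹) y ∂μ) ^ p := by rw [lintegral_congr_ae hsplit]; rfl
    _ ≤ ((∫⁻ y, ((k y * f y ^ p * w y ^ (-p)) ^ p⁻¹) ^ p ∂μ) ^ (1 / p) *
          (∫⁻ y, ((k y * w y ^ q) ^ q⁻¹) ^ q ∂μ) ^ (1 / q)) ^ p := by
        gcongr
        exact ENNReal.lintegral_mul_le_Lp_mul_Lq μ hpq (by fun_prop) (by fun_prop)
    _ = (∫⁻ y, k y * w y ^ q ∂μ) ^ (p / q) * ∫⁻ y, k y * f y ^ p * w y ^ (-p) ∂μ := by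
        simp only [ENNReal.rpow_inv_rpow hp.ne', ENNReal.rpow_inv_rpow hq.ne',
          ENNReal.mul_rpow_of_nonneg _ _ hp.le, ← ENNReal.rpow_mul]
        rw [one_div_mul_cancel hp.ne', ENNReal.rpow_one, mul_comm, one_div_mul_eq_div]

theorem lintegral_rpow_lintegral_mul_le_of_schur [SFinite μ] {p q : ℝ}
    (hpq : p.HolderConjugate q) {K : α → α → ℝ≥0∞} (hK : Measurable (uncurry K))
    {w : α → ℝ≥0∞} (hw : Measurable w) (hw0 : ∀ᵐ y ∂μ, w y ≠ 0) (hwtop : ∀ᵐ y ∂μ, w y ≠ ∞)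
    {A B : ℝ≥0∞} (hA : ∀ᵐ x ∂μ, ∫⁻ y, K x y * w y ^ q ∂μ ≤ A * w x ^ q)
    (hB : ∀ᵐ y ∂μ, ∫⁻ x, K x y * w x ^ p ∂μ ≤ B * w y ^ p)
    {f : α → ℝ≥0∞} (hf : AEMeasurable f μ) :
    ∫⁻ x, (∫⁻ y, K x y * f y ∂μ) ^ p ∂μ ≤ A ^ (p / q) * B * ∫⁻ y, f y ^ p ∂μ := by
  have hp := hpq.pos
  have hq := hpq.symm.pos
  have hKx (x : α) : Measurable (K x) := hK.comp measurable_prodMk_left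
  have hG : AEMeasurable (uncurry fun x y => w x ^ p * (K x y * f y ^ p * w y ^ (-p)))
      (μ.prod μ) := by
    have := hf.comp_snd (μ := μ)
    fun_prop
  calc ∫⁻ x, (∫⁻ y, K x y * f y ∂μ) ^ p ∂μ
      ≤ ∫⁻ x, A ^ (p / q) * ∫⁻ y, w x ^ p * (K x y * f y ^ p * w y ^ (-p)) ∂μ ∂μ := by
        refine lintegral_mono_ae ?_
        filter_upwards [hA] with x hx
        calc (∫⁻ y, K x y * f y ∂μ) ^ p
            ≤ (A * w x ^ q) ^ (p / q) * ∫⁻ y, K x y * f y ^ p * w y ^ (-p) ∂μ := by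
              grw [lintegral_mul_rpow_le_weighted hpq (hKx x).aemeasurable hf hw.aemeasurable
                hw0 hwtop, hx]
          _ = _ := by
              rw [lintegral_const_mul'' _ (by fun_prop),
                ENNReal.mul_rpow_of_nonneg _ _ (by positivity), ← ENNReal.rpow_mul,
                mul_div_cancel₀ _ hq.ne', mul_assoc]
    _ = A ^ (p / q) * ∫⁻ y, ∫⁻ x, w x ^ p * (K x y * f y ^ p * w y ^ (-p)) ∂μ ∂μ := by
        have hGx : AEMeasurable
            (fun x => ∫⁻ y, w x ^ p * (K x y * f y ^ p * w y ^ (-p)) ∂μ) μ :=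
          hG.lintegral_prod_right'
        rw [lintegral_const_mul'' _ hGx, lintegral_lintegral_swap hG]
    _ = A ^ (p / q) * ∫⁻ y, f y ^ p * w y ^ (-p) * ∫⁻ x, K x y * w x ^ p ∂μ ∂μ := by
        congr 1
        refine lintegral_congr fun y => ?_
        rw [← lintegral_const_mul _ (by fun_prop)]
        congr 1 with x
        ring
    _ ≤ A ^ (p / q) * ∫⁻ y, B * f y ^ p ∂μ := by
        gcongr A ^ (p / q) * ?_
        refine lintegral_mono_ae ?_
        filter_upwards [hB, hw0, hwtop] with y hy h0 htop
        calc f y ^ p * w y ^ (-p) * ∫⁻ x, K x y * w x ^ p ∂μ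
            ≤ f y ^ p * w y ^ (-p) * (B * w y ^ p) := by gcongr
          _ = B * f y ^ p * (w y ^ (-p) * w y ^ p) := by ring
          _ = B * f y ^ p := by
              rw [ENNReal.rpow_neg, ENNReal.inv_mul_cancel (by simp [h0, hp.le])
                (by simp [htop, hp.le]), mul_one]
    _ = A ^ (p / q) * B * ∫⁻ y, f y ^ p ∂μ := by
        rw [lintegral_const_mul'' _ (hf.pow_const p), mul_assoc]

end Schur

theorem max_norm_lt_three_mul_norm_sub {F : Type*} [SeminormedAddCommGroup F] {x y : F}
    (h : min ‖x‖ ‖y‖ / 2 < ‖x - y‖) : max ‖x‖ ‖y‖ < 3 * ‖x - y‖ := by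
  have h₁ := norm_sub_norm_le x y
  have h₂ := norm_sub_norm_le y x
  rw [norm_sub_rev y x] at h₂
  rcases le_total ‖x‖ ‖y‖ with hxy | hxy
  · rw [min_eq_left hxy] at h; rw [max_eq_right hxy]; linarith
  · rw [min_eq_right hxy] at h; rw [max_eq_left hxy]; linarith

theorem integrableOn_Ioi_pow_mul_max_rpow_neg_mul_rpow {n : ℕ} (hn : 1 ≤ n) {a b : ℝ}
    (ha : -(n : ℝ) < a) (hab : a - b < -n) :
    IntegrableOn (fun r : ℝ => r ^ (n - 1) • (max 1 r ^ (-b) * r ^ a)) (Ioi 0) := by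
  have hpow {r : ℝ} (hr : 0 < r) : r ^ (n - 1) = r ^ ((n : ℝ) - 1) := by
    rw [← Real.rpow_natCast, Nat.cast_sub hn, Nat.cast_one]
  rw [← Ioc_union_Ioi_eq_Ioi zero_le_one]
  refine IntegrableOn.union ?_ ?_
  · have h := (intervalIntegral.intervalIntegrable_rpow' (a := 0) (b := 1)
      (r := (n : ℝ) - 1 + a) (by linarith)).1
    refine h.congr_fun (fun r hr => ?_) measurableSet_Ioc
    beta_reduce
    rw [smul_eq_mul, hpow hr.1, max_eq_left hr.2, Real.one_rpow, one_mul,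
      Real.rpow_add hr.1]
  · refine (integrableOn_Ioi_rpow_of_lt (a := (n : ℝ) - 1 + (a - b)) (by linarith)
      zero_lt_one).congr_fun (fun r (hr : 1 < r) => ?_) measurableSet_Ioi
    have hr0 : 0 < r := zero_lt_one.trans hr
    beta_reduce
    rw [smul_eq_mul, hpow hr0, max_eq_right hr.le, Real.rpow_add hr0, sub_eq_add_neg a,
      Real.rpow_add hr0]
    ring

section OffDiagonalKernel

variable {E : Type*} [NormedAddCommGroup E] [NormedSpace ℝ E]

noncomputable def offDiagonalKernel (σ : ℝ) (x y : E) : ℝ≥0∞ :=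
  if min ‖x‖ ‖y‖ / 2 < ‖x - y‖ then
    ENNReal.ofReal (‖x - y‖ ^ (-(finrank ℝ E : ℝ) - σ) * ‖y‖ ^ σ)
  else 0

theorem offDiagonalKernel_le {σ : ℝ} (hσ : 0 ≤ (finrank ℝ E : ℝ) + σ) (x y : E) :
    offDiagonalKernel σ x y ≤ ENNReal.ofReal
      (3 ^ ((finrank ℝ E : ℝ) + σ) * max ‖x‖ ‖y‖ ^ (-((finrank ℝ E : ℝ) + σ)) * ‖y‖ ^ σ) := by
  unfold offDiagonalKernel
  split_ifs with h
  · have hmax := max_norm_lt_three_mul_norm_sub h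
    have hpos : 0 < max ‖x‖ ‖y‖ := by
      have : 0 ≤ min ‖x‖ ‖y‖ := by positivity
      linarith [norm_sub_le x y, le_max_left ‖x‖ ‖y‖, le_max_right ‖x‖ ‖y‖]
    refine ENNReal.ofReal_le_ofReal (mul_le_mul_of_nonneg_right ?_ (by positivity))
    calc ‖x - y‖ ^ (-(finrank ℝ E : ℝ) - σ)
        ≤ (max ‖x‖ ‖y‖ / 3) ^ (-((finrank ℝ E : ℝ) + σ)) := by
          rw [← neg_add']
          exact Real.rpow_le_rpow_of_nonpos (by positivity) (by linarith) (by linarith)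
      _ = _ := by
          rw [Real.div_rpow hpos.le (by norm_num), Real.rpow_neg (by norm_num : (0:ℝ) ≤ 3)]
          field_simp
  · exact zero_le

variable [MeasurableSpace E] [BorelSpace E]

theorem setLIntegral_eq_lintegral_offDiagonalKernel_mul (μ : Measure E) (σ : ℝ) (g : E → ℝ)
    (x : E) :
    ∫⁻ y in {y : E | min ‖x‖ ‖y‖ / 2 < ‖x - y‖},
        ENNReal.ofReal (‖x - y‖ ^ (-(finrank ℝ E : ℝ) - σ) * ‖y‖ ^ σ * |g y|) ∂μ =
      ∫⁻ y, offDiagonalKernel σ x y * ‖g y‖ₑ ∂μ := by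
  rw [← lintegral_indicator (isOpen_lt (by fun_prop) (by fun_prop)).measurableSet]
  refine lintegral_congr fun y => ?_
  simp only [indicator_apply, mem_ofPred_eq, offDiagonalKernel, Real.enorm_eq_ofReal_abs]
  split_ifs
  · exact ENNReal.ofReal_mul (by positivity)
  · exact (zero_mul _).symm

variable [FiniteDimensional ℝ E]

theorem measurable_offDiagonalKernel (σ : ℝ) :
    Measurable (uncurry (offDiagonalKernel σ : E → E → ℝ≥0∞)) := by
  refine Measurable.ite ?_ (by fun_prop) measurable_const
  exact (isOpen_lt (by fun_prop) (by fun_prop)).measurableSet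

variable (μ : Measure E) [μ.IsAddHaarMeasure]

theorem lintegral_max_rpow_neg_mul_rpow {a b R : ℝ} (hR : 0 < R) :
    ∫⁻ z, ENNReal.ofReal (max R ‖z‖ ^ (-b) * ‖z‖ ^ a) ∂μ =
      ENNReal.ofReal (R ^ ((finrank ℝ E : ℝ) + a - b)) *
        ∫⁻ z, ENNReal.ofReal (max 1 ‖z‖ ^ (-b) * ‖z‖ ^ a) ∂μ := by
  have hscale (z : E) : max R ‖z‖ ^ (-b) * ‖z‖ ^ a =
      R ^ (a - b) * (max 1 ‖R⁻¹ • z‖ ^ (-b) * ‖R⁻¹ • z‖ ^ a) := by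
    have hmax : max 1 ‖R⁻¹ • z‖ = R⁻¹ * max R ‖z‖ := by
      rw [norm_smul, Real.norm_of_nonneg (inv_nonneg.2 hR.le), mul_max_of_nonneg _ _
        (inv_nonneg.2 hR.le), inv_mul_cancel₀ hR.ne']
    rw [hmax, norm_smul, Real.norm_of_nonneg (inv_nonneg.2 hR.le),
      Real.mul_rpow (inv_nonneg.2 hR.le) (by positivity),
      Real.mul_rpow (inv_nonneg.2 hR.le) (norm_nonneg z), Real.inv_rpow hR.le,
      Real.inv_rpow hR.le, Real.rpow_sub hR, Real.rpow_neg hR.le]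
    field_simp
  have hmap : Measure.map (R⁻¹ • ·) μ = ENNReal.ofReal (R ^ (finrank ℝ E : ℝ)) • μ := by
    rw [Measure.map_addHaar_smul μ (inv_ne_zero hR.ne'), inv_pow, inv_inv,
      abs_of_pos (by positivity), Real.rpow_natCast]
  calc ∫⁻ z, ENNReal.ofReal (max R ‖z‖ ^ (-b) * ‖z‖ ^ a) ∂μ
      = ENNReal.ofReal (R ^ (a - b)) *
          ∫⁻ z, ENNReal.ofReal (max 1 ‖z‖ ^ (-b) * ‖z‖ ^ a) ∂(Measure.map (R⁻¹ • ·) μ) := by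
        rw [lintegral_map (by fun_prop) (by fun_prop), ← lintegral_const_mul _ (by fun_prop)]
        simp_rw [hscale, ENNReal.ofReal_mul (Real.rpow_nonneg hR.le _)]
    _ = _ := by
        rw [hmap, lintegral_smul_measure, smul_eq_mul, ← mul_assoc,
          ← ENNReal.ofReal_mul (by positivity), ← Real.rpow_add hR]
        ring_nf

theorem lintegral_max_one_rpow_neg_mul_rpow_lt_top [Nontrivial E] {a b : ℝ}
    (ha : -(finrank ℝ E : ℝ) < a) (hab : a - b < -finrank ℝ E) :
    ∫⁻ z, ENNReal.ofReal (max 1 ‖z‖ ^ (-b) * ‖z‖ ^ a) ∂μ < ∞ :=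
  Integrable.lintegral_lt_top <| (integrable_fun_norm_addHaar μ
    (f := fun r => max 1 r ^ (-b) * r ^ a)).2 <|
    integrableOn_Ioi_pow_mul_max_rpow_neg_mul_rpow finrank_pos ha hab

theorem exists_lintegral_offDiagonalKernel_mul_rpow_neg_le_right [Nontrivial E] {σ s : ℝ}
    (hs : 0 < s) (hsσ : s < finrank ℝ E + σ) :
    ∃ C ≠ ∞, ∀ᵐ x ∂μ,
      ∫⁻ y, offDiagonalKernel σ x y * ENNReal.ofReal (‖y‖ ^ (-s)) ∂μ ≤
        C * ENNReal.ofReal (‖x‖ ^ (-s)) := by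
  set b : ℝ := finrank ℝ E + σ
  refine ⟨ENNReal.ofReal (3 ^ b) * ∫⁻ z, ENNReal.ofReal (max 1 ‖z‖ ^ (-b) * ‖z‖ ^ (σ - s)) ∂μ,
    mul_ne_top ofReal_ne_top (lintegral_max_one_rpow_neg_mul_rpow_lt_top μ
      (by linarith) (by linarith)).ne, ?_⟩
  filter_upwards [μ.ae_ne 0] with x hx
  calc ∫⁻ y, offDiagonalKernel σ x y * ENNReal.ofReal (‖y‖ ^ (-s)) ∂μ
      ≤ ∫⁻ y, ENNReal.ofReal (3 ^ b) *
          ENNReal.ofReal (max ‖x‖ ‖y‖ ^ (-b) * ‖y‖ ^ (σ - s)) ∂μ := by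
        refine lintegral_mono_ae ?_
        filter_upwards [μ.ae_ne 0] with y hy
        grw [offDiagonalKernel_le (by linarith) x y, ← ENNReal.ofReal_mul (by positivity),
          ← ENNReal.ofReal_mul (by positivity), sub_eq_add_neg σ,
          Real.rpow_add (norm_pos_iff.2 hy)]
        rw [mul_assoc, mul_assoc]
    _ = _ := by
        rw [lintegral_const_mul _ (by fun_prop),
          lintegral_max_rpow_neg_mul_rpow μ (norm_pos_iff.2 hx),
          show (finrank ℝ E : ℝ) + (σ - s) - b = -s by ring]
        ring

theorem exists_lintegral_offDiagonalKernel_mul_rpow_neg_le_left [Nontrivial E] {σ r : ℝ}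
    (hrn : r < finrank ℝ E) (hrσ : 0 < r + σ) :
    ∃ C ≠ ∞, ∀ᵐ y ∂μ,
      ∫⁻ x, offDiagonalKernel σ x y * ENNReal.ofReal (‖x‖ ^ (-r)) ∂μ ≤
        C * ENNReal.ofReal (‖y‖ ^ (-r)) := by
  set b : ℝ := finrank ℝ E + σ with hb
  refine ⟨ENNReal.ofReal (3 ^ b) * ∫⁻ z, ENNReal.ofReal (max 1 ‖z‖ ^ (-b) * ‖z‖ ^ (-r)) ∂μ,
    mul_ne_top ofReal_ne_top (lintegral_max_one_rpow_neg_mul_rpow_lt_top μ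
      (by linarith) (by linarith)).ne, ?_⟩
  filter_upwards [μ.ae_ne 0] with y hy
  have hy : 0 < ‖y‖ := norm_pos_iff.2 hy
  calc ∫⁻ x, offDiagonalKernel σ x y * ENNReal.ofReal (‖x‖ ^ (-r)) ∂μ
      ≤ ∫⁻ x, ENNReal.ofReal (3 ^ b * ‖y‖ ^ σ) *
          ENNReal.ofReal (max ‖y‖ ‖x‖ ^ (-b) * ‖x‖ ^ (-r)) ∂μ := by
        refine lintegral_mono fun x => ?_
        grw [offDiagonalKernel_le (by linarith) x y, ← ENNReal.ofReal_mul (by positivity),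
          ← ENNReal.ofReal_mul (by positivity), max_comm]
        exact le_of_eq (by rw [hb]; ring_nf)
    _ = _ := by
        rw [lintegral_const_mul _ (by fun_prop), lintegral_max_rpow_neg_mul_rpow μ hy,
          ← mul_assoc, ← ENNReal.ofReal_mul (by positivity), mul_assoc (3 ^ b),
          ← Real.rpow_add hy, show σ + ((finrank ℝ E : ℝ) + -r - b) = -r by ring,
          ENNReal.ofReal_mul (by positivity)]
        ring

theorem exists_lintegral_rpow_lintegral_offDiagonalKernel_mul_le [Nontrivial E] {σ p q : ℝ}
    (hσ : 0 < σ) (hpq : p.HolderConjugate q) :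
    ∃ C ≠ ∞, ∀ f : E → ℝ≥0∞, AEMeasurable f μ →
      ∫⁻ x, (∫⁻ y, offDiagonalKernel σ x y * f y ∂μ) ^ p ∂μ ≤ C * ∫⁻ y, f y ^ p ∂μ := by
  have hn : (0 : ℝ) < finrank ℝ E := by exact_mod_cast finrank_pos
  have hp := hpq.pos
  have hq := hpq.symm.pos
  set t : ℝ := finrank ℝ E / (p * q) with ht
  have htp : t * p = finrank ℝ E / q := by rw [ht]; field_simp
  have htq : t * q = finrank ℝ E / p := by rw [ht]; field_simp
  obtain ⟨A, hA, hAbound⟩ := exists_lintegral_offDiagonalKernel_mul_rpow_neg_le_right μ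
    (σ := σ) (s := t * q) (by positivity) (by rw [htq]; linarith [div_lt_self hn hpq.lt])
  obtain ⟨B, hB, hBbound⟩ := exists_lintegral_offDiagonalKernel_mul_rpow_neg_le_left μ
    (σ := σ) (r := t * p) (by rw [htp]; exact div_lt_self hn hpq.symm.lt) (by positivity)
  have hw {c : ℝ} (hc : 0 ≤ c) (y : E) :
      ENNReal.ofReal (‖y‖ ^ (-t)) ^ c = ENNReal.ofReal (‖y‖ ^ (-(t * c))) := by
    rw [ENNReal.ofReal_rpow_of_nonneg (by positivity) hc, ← Real.rpow_mul (norm_nonneg y),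
      neg_mul]
  refine ⟨A ^ (p / q) * B, mul_ne_top (rpow_ne_top_of_nonneg (by positivity) hA) hB,
    fun f hf => lintegral_rpow_lintegral_mul_le_of_schur hpq (measurable_offDiagonalKernel σ)
      (w := fun y => ENNReal.ofReal (‖y‖ ^ (-t))) (by fun_prop) ?_
      (.of_forall fun _ => ofReal_ne_top) ?_ ?_ hf⟩
  · filter_upwards [μ.ae_ne 0] with y hy
    exact (ENNReal.ofReal_pos.2 (Real.rpow_pos_of_pos (norm_pos_iff.2 hy) _)).ne'
  · simpa only [hw hq.le] using hAbound
  · simpa only [hw hp.le] using hBbound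

end OffDiagonalKernel

/-- Schur-test bound used in the proof of the reversed Hardy inequality: the operator with
kernel `1_{|x−y| > min(|x|,|y|)/2} |x−y|^{−d−σ} |y|^{σ}` is bounded on `L^p(ℝ^d)` for every
`σ > 0` and `p ∈ (1,∞)`. -/
theorem off_diagonal_kernel_bounded
    (d : ℕ) (hd : 1 ≤ d) (σ p : ℝ) (hσ : 0 < σ) (hp : 1 < p) :
    ∃ C : ℝ, 0 < C ∧
      ∀ g : EuclideanSpace ℝ (Fin d) → ℝ, MemLp g (ENNReal.ofReal p) volume →
        (∫⁻ x, (∫⁻ y in {y : EuclideanSpace ℝ (Fin d) | min ‖x‖ ‖y‖ / 2 < ‖x - y‖},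
            ENNReal.ofReal (‖x - y‖ ^ (-(d : ℝ) - σ) * ‖y‖ ^ σ * |g y|)) ^ p) ^ (1 / p)
          ≤ ENNReal.ofReal C * eLpNorm g (ENNReal.ofReal p) volume := by
  have : Nontrivial (EuclideanSpace ℝ (Fin d)) :=
    Module.nontrivial_of_finrank_pos (R := ℝ) (by rw [finrank_euclideanSpace_fin]; exact hd)
  have hp0 : 0 < p := zero_lt_one.trans hp
  obtain ⟨C, hC, hbound⟩ := exists_lintegral_rpow_lintegral_offDiagonalKernel_mul_le
    (volume : Measure (EuclideanSpace ℝ (Fin d))) hσ (Real.HolderConjugate.conjExponent hp)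
  refine ⟨(C ^ (1 / p)).toReal + 1, by positivity, fun g hg => ?_⟩
  have hkernel := setLIntegral_eq_lintegral_offDiagonalKernel_mul volume σ g
  simp only [finrank_euclideanSpace_fin] at hkernel
  calc _ = (∫⁻ x, (∫⁻ y, offDiagonalKernel σ x y * ‖g y‖ₑ) ^ p) ^ (1 / p) := by
        simp_rw [hkernel]
    _ ≤ (C * ∫⁻ y, ‖g y‖ₑ ^ p) ^ (1 / p) := by
        gcongr
        exact hbound _ hg.1.enorm
    _ = C ^ (1 / p) * eLpNorm g (ENNReal.ofReal p) volume := by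
        rw [ENNReal.mul_rpow_of_nonneg _ _ (by positivity), eLpNorm_eq_lintegral_rpow_enorm_toReal
          (by simpa using hp0) ofReal_ne_top, toReal_ofReal hp0.le]
    _ ≤ _ := by
        gcongr
        rw [ENNReal.le_ofReal_iff_toReal_le (rpow_ne_top_of_nonneg (by positivity) hC)
          (by positivity)]
        linarith
end

section
/- Let d ≥ 1 be an integer, α ∈ (0,2), and γ ∈ (0, (d+1)/α). Then there is a constant C, depending only on d, α, γ, such that for all t > 0 and all r ≥ 0: ∫_0^∞ s^{γ−1} · (s+t)^{−(d+1)/α} · ( (s+t)^{1/α} / ( (s+t)^{1/α} + r ) )^{d+1+α} ds ≤ C · t^{−(d+1−γα)/α} · ( t^{1/α} / ( t^{1/α} + r ) )^{d+1−αγ}. -/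
open MeasureTheory Set

/-- Pointwise bound: the integrand is at most `s^(γ-1) * ((s+t)^(1/α)+r)^(-D)`. -/
lemma time_int_pt_bound (D α γ t r s : ℝ) (hD : 0 < D) (hα : 0 < α)
    (ht : 0 < t) (hr : 0 ≤ r) (hs : 0 < s) :
    s ^ (γ - 1) * (s + t) ^ (-D / α) *
        ((s + t) ^ (1 / α) / ((s + t) ^ (1 / α) + r)) ^ (D + α)
      ≤ s ^ (γ - 1) * ((s + t) ^ (1 / α) + r) ^ (-D) := by
  have hst : 0 < s + t := by linarith
  set a := (s + t) ^ (1 / α) with ha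
  have ha0 : 0 < a := Real.rpow_pos_of_pos hst _
  have hb0 : 0 < a + r := by linarith
  have hs1 : 0 ≤ s ^ (γ - 1) := Real.rpow_nonneg hs.le _
  have h1 : (s + t) ^ (-D / α) = a ^ (-D) := by
    rw [ha, ← Real.rpow_mul hst.le]
    congr 1; field_simp
  have h2 : (a / (a + r)) ^ (D + α) = a ^ (D + α) / (a + r) ^ (D + α) :=
    Real.div_rpow ha0.le hb0.le _
  have haα : a ^ α = s + t := by
    rw [ha, ← Real.rpow_mul hst.le, one_div, inv_mul_cancel₀ hα.ne', Real.rpow_one]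
  have h3 : a ^ (-D) * a ^ (D + α) = s + t := by
    rw [← Real.rpow_add ha0, show -D + (D + α) = α by ring, haα]
  calc s ^ (γ - 1) * (s + t) ^ (-D / α) * ((a / (a + r)) ^ (D + α))
      = s ^ (γ - 1) * ((s + t) / (a + r) ^ (D + α)) := by
        rw [h1, h2, mul_assoc, mul_div_assoc', h3]
    _ ≤ s ^ (γ - 1) * ((a + r) ^ α / (a + r) ^ (D + α)) := by
        gcongr
        calc s + t = a ^ α := haα.symm
          _ ≤ (a + r) ^ α := Real.rpow_le_rpow ha0.le (by linarith) hα.le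
    _ = s ^ (γ - 1) * (a + r) ^ (-D) := by
        rw [show (-D : ℝ) = α - (D + α) by ring, Real.rpow_sub hb0]

/-- Time-integral estimate underlying Lemma 2.8 of the paper (gradient Riesz-heat kernel
bound): for `γ ∈ (0, (d+1)/α)`,
`∫_0^∞ s^{γ−1} (s+t)^{−(d+1)/α} ((s+t)^{1/α}/((s+t)^{1/α}+r))^{d+1+α} ds ≤
C t^{−(d+1−γα)/α} (t^{1/α}/(t^{1/α}+r))^{d+1−αγ}`. -/
theorem time_integral_gradient_riesz_heat
    (d : ℕ) (hd : 1 ≤ d) (α γ : ℝ)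
    (hα1 : 0 < α) (hα2 : α < 2) (hγ1 : 0 < γ) (hγ2 : γ < ((d : ℝ) + 1) / α) :
    ∃ C : ℝ, 0 < C ∧
      ∀ t r : ℝ, 0 < t → 0 ≤ r →
        (∫⁻ s in Set.Ioi (0 : ℝ), ENNReal.ofReal
            (s ^ (γ - 1) * (s + t) ^ (-((d : ℝ) + 1) / α) *
              ((s + t) ^ (1 / α) / ((s + t) ^ (1 / α) + r)) ^ ((d : ℝ) + 1 + α)))
          ≤ ENNReal.ofReal
              (C * t ^ (-((d : ℝ) + 1 - γ * α) / α) *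
                (t ^ (1 / α) / (t ^ (1 / α) + r)) ^ ((d : ℝ) + 1 - α * γ)) := by
  have hD : (0 : ℝ) < (d : ℝ) + 1 := by positivity
  set D := (d : ℝ) + 1 with hDdef
  have hγD : γ < D / α := hγ2
  have hsub : 0 < D / α - γ := by linarith
  refine ⟨1 / γ + 1 / (D / α - γ), by positivity, fun t r ht hr => ?_⟩
  set C := 1 / γ + 1 / (D / α - γ) with hCdef
  have htα : 0 < t ^ (1 / α) := Real.rpow_pos_of_pos ht _
  set T := t ^ (1 / α) + r with hTdef
  have hT : 0 < T := by positivity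
  set A := T ^ α with hAdef
  have hA : 0 < A := Real.rpow_pos_of_pos hT _
  -- split the integral
  have hsplit : Set.Ioc (0 : ℝ) A ∪ Set.Ioi A = Set.Ioi 0 :=
    Set.Ioc_union_Ioi_eq_Ioi hA.le
  rw [← hsplit, lintegral_union measurableSet_Ioi Set.Ioc_disjoint_Ioi_same]
  -- bound on Ioc 0 A
  have hb1 : ∀ s ∈ Set.Ioc (0 : ℝ) A,
      s ^ (γ - 1) * (s + t) ^ (-D / α) *
          ((s + t) ^ (1 / α) / ((s + t) ^ (1 / α) + r)) ^ (D + α)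
        ≤ s ^ (γ - 1) * T ^ (-D) := by
    intro s hs
    refine (time_int_pt_bound D α γ t r s hD hα1 ht hr hs.1).trans ?_
    have h1 : T ≤ (s + t) ^ (1 / α) + r := by
      have : t ^ (1 / α) ≤ (s + t) ^ (1 / α) :=
        Real.rpow_le_rpow ht.le (by linarith [hs.1]) (by positivity)
      rw [hTdef]; linarith
    have h2 : ((s + t) ^ (1 / α) + r) ^ (-D) ≤ T ^ (-D) :=
      Real.rpow_le_rpow_of_nonpos hT h1 (by linarith)
    exact mul_le_mul_of_nonneg_left h2 (Real.rpow_nonneg hs.1.le _)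
  -- bound on Ioi A
  have hb2 : ∀ s ∈ Set.Ioi A,
      s ^ (γ - 1) * (s + t) ^ (-D / α) *
          ((s + t) ^ (1 / α) / ((s + t) ^ (1 / α) + r)) ^ (D + α)
        ≤ s ^ (γ - 1 - D / α) := by
    intro s hs
    have hs0 : 0 < s := hA.trans hs
    refine (time_int_pt_bound D α γ t r s hD hα1 ht hr hs0).trans ?_
    have h1 : s ^ (1 / α) ≤ (s + t) ^ (1 / α) + r := by
      have : s ^ (1 / α) ≤ (s + t) ^ (1 / α) :=
        Real.rpow_le_rpow hs0.le (by linarith) (by positivity)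
      linarith
    have h2 : ((s + t) ^ (1 / α) + r) ^ (-D) ≤ (s ^ (1 / α)) ^ (-D) :=
      Real.rpow_le_rpow_of_nonpos (Real.rpow_pos_of_pos hs0 _) h1 (by linarith)
    calc s ^ (γ - 1) * ((s + t) ^ (1 / α) + r) ^ (-D)
        ≤ s ^ (γ - 1) * (s ^ (1 / α)) ^ (-D) :=
          mul_le_mul_of_nonneg_left h2 (Real.rpow_nonneg hs0.le _)
      _ = s ^ (γ - 1 - D / α) := by
          rw [← Real.rpow_mul hs0.le, ← Real.rpow_add hs0]
          congr 1; field_simp; ring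
  -- evaluate first integral
  have int1 : IntegrableOn (fun s : ℝ => s ^ (γ - 1) * T ^ (-D)) (Set.Ioc 0 A) :=
    ((intervalIntegral.intervalIntegrable_rpow' (by linarith)).1).mul_const _
  have e1 : (∫⁻ s in Set.Ioc (0 : ℝ) A, ENNReal.ofReal (s ^ (γ - 1) * T ^ (-D)))
      = ENNReal.ofReal (A ^ γ / γ * T ^ (-D)) := by
    rw [← ofReal_integral_eq_lintegral_ofReal int1
      ((ae_restrict_iff' measurableSet_Ioc).mpr (Filter.Eventually.of_forall
        (fun s hs => mul_nonneg (Real.rpow_nonneg hs.1.le _) (Real.rpow_nonneg hT.le _))))]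
    congr 1
    rw [MeasureTheory.integral_mul_const, ← intervalIntegral.integral_of_le hA.le,
      integral_rpow (Or.inl (by linarith)),
      show γ - 1 + 1 = γ by ring, Real.zero_rpow hγ1.ne', sub_zero]
  -- evaluate second integral
  have hp : γ - 1 - D / α < -1 := by linarith
  have int2 : IntegrableOn (fun s : ℝ => s ^ (γ - 1 - D / α)) (Set.Ioi A) :=
    integrableOn_Ioi_rpow_of_lt hp hA
  have e2 : (∫⁻ s in Set.Ioi A, ENNReal.ofReal (s ^ (γ - 1 - D / α)))
      = ENNReal.ofReal (A ^ (γ - D / α) / (D / α - γ)) := by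
    rw [← ofReal_integral_eq_lintegral_ofReal int2
      ((ae_restrict_iff' measurableSet_Ioi).mpr (Filter.Eventually.of_forall
        (fun s hs => Real.rpow_nonneg (hA.trans hs).le _)))]
    congr 1
    rw [integral_Ioi_rpow_of_lt hp hA, show γ - 1 - D / α + 1 = γ - D / α by ring,
      neg_div, ← div_neg, neg_sub]
  -- monotonicity
  have le1 : (∫⁻ s in Set.Ioc (0 : ℝ) A, ENNReal.ofReal
      (s ^ (γ - 1) * (s + t) ^ (-D / α) *
        ((s + t) ^ (1 / α) / ((s + t) ^ (1 / α) + r)) ^ (D + α)))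
      ≤ ENNReal.ofReal (A ^ γ / γ * T ^ (-D)) := by
    rw [← e1]
    refine setLIntegral_mono (by fun_prop) fun s hs => ENNReal.ofReal_le_ofReal (hb1 s hs)
  have le2 : (∫⁻ s in Set.Ioi A, ENNReal.ofReal
      (s ^ (γ - 1) * (s + t) ^ (-D / α) *
        ((s + t) ^ (1 / α) / ((s + t) ^ (1 / α) + r)) ^ (D + α)))
      ≤ ENNReal.ofReal (A ^ (γ - D / α) / (D / α - γ)) := by
    rw [← e2]
    refine setLIntegral_mono (by fun_prop) fun s hs => ENNReal.ofReal_le_ofReal (hb2 s hs)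
  refine (add_le_add le1 le2).trans ?_
  rw [← ENNReal.ofReal_add (by positivity) (by positivity)]
  apply ENNReal.ofReal_le_ofReal
  -- final real computation
  have hAγ : A ^ γ = T ^ (α * γ) := by rw [hAdef, ← Real.rpow_mul hT.le]
  have hAγ' : A ^ (γ - D / α) = T ^ (α * γ - D) := by
    rw [hAdef, ← Real.rpow_mul hT.le]
    congr 1; field_simp
  have hkey : t ^ (-(D - γ * α) / α) * (t ^ (1 / α) / T) ^ (D - α * γ)
      = T ^ (α * γ - D) := by
    have h1 : (t ^ (1 / α)) ^ (D - α * γ) = t ^ (1 / α * (D - α * γ)) :=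
      (Real.rpow_mul ht.le _ _).symm
    rw [Real.div_rpow (Real.rpow_nonneg ht.le _) hT.le, h1, mul_div_assoc',
      ← Real.rpow_add ht, show -(D - γ * α) / α + 1 / α * (D - α * γ) = 0 by
        field_simp; ring, Real.rpow_zero, one_div, ← Real.rpow_neg hT.le]
    congr 1; ring
  have hTne : T ^ (α * γ - D) * T ^ (-D) = 0 ∨ True := Or.inr trivial
  have hmul : A ^ γ / γ * T ^ (-D) = T ^ (α * γ - D) * (1 / γ) := by
    rw [hAγ, div_mul_eq_mul_div, ← Real.rpow_add hT,
      show α * γ + -D = α * γ - D by ring]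
    ring
  refine le_of_eq ?_
  rw [hmul, hAγ', mul_assoc, hkey, hCdef]; ring
end

section
/- Let d ≥ 1 be an integer, α ∈ (1,2), β ∈ ((d+α)/2, d+α), and γ ∈ (0, min(β, d)/α). Then there is a constant C, depending only on d, α, β, γ, such that for all t > 0, all r ≥ 0, and all w > 0: ∫_0^∞ s^{γ−1} · (s+t)^{−d/α} · ( (s+t)^{1/α} / ( (s+t)^{1/α} + r ) )^{d+α} · min( 1, w/(s+t)^{1/α} )^{β−d} ds ≤ C · t^{−(d−γα)/α} · ( t^{1/α} / ( t^{1/α} + r ) )^{d−αγ} · min( 1, w/(t^{1/α} + r) )^{β−d}. -/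
open MeasureTheory Set Real

/-!
With `u = (s + t)^(1/α)`, `ρ = t^(1/α) + r` and `m = min β d`, the spatial factor is at most
`min(1, w/ρ)^(β-d) ρ^(m-d) max(ρ, u)^(-m)`: since `u + r ≥ max(ρ, u)`, the factor `u/(u+r)`
absorbs the weight `min(1, w/u)^(β-d)` when `d ≤ β ≤ d + α`, and for `β < d` the weight grows by
at most `(max(ρ, u)/ρ)^(d-β)`. As `max(ρ, u)^(-m) ≤ max(ρ^α, s)^(-m/α)`, the time integral is
bounded by `∫₀^∞ s^(γ-1) max(X, s)^(-m/α) ds = X^(γ-m/α) (1/γ + 1/(m/α - γ))` with `X = ρ^α`,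
finite because `0 < γ < m/α`, and `ρ^(m-d) X^(γ-m/α) = ρ^(αγ-d)` is exactly the claimed bound.
-/

theorem lintegral_Ioi_rpow_mul_max_rpow_neg {γ p X : ℝ} (hγ : 0 < γ) (hγp : γ < p)
    (hX : 0 < X) :
    ∫⁻ s in Ioi 0, ENNReal.ofReal (s ^ (γ - 1) * max X s ^ (-p)) =
      ENNReal.ofReal (X ^ (γ - p) * (1 / γ + 1 / (p - γ))) := by
  set f : ℝ → ℝ := fun s ↦ s ^ (γ - 1) * max X s ^ (-p)
  have hnear : EqOn f (fun s ↦ X ^ (-p) * s ^ (γ - 1)) (Ioc 0 X) := fun s hs ↦ by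
    simp only [f, max_eq_left hs.2, mul_comm]
  have hfar : EqOn f (fun s ↦ s ^ (γ - 1 - p)) (Ioi X) := fun s hs ↦ by
    simp only [f, max_eq_right (le_of_lt (mem_Ioi.1 hs)), sub_eq_add_neg _ p]
    rw [rpow_add (hX.trans hs)]
  have int_near : IntegrableOn f (Ioc 0 X) :=
    ((intervalIntegrable_iff_integrableOn_Ioc_of_le hX.le).1
      ((intervalIntegral.intervalIntegrable_rpow' (by linarith)).const_mul _)).congr_fun
      hnear.symm measurableSet_Ioc
  have int_far : IntegrableOn f (Ioi X) :=
    (integrableOn_Ioi_rpow_of_lt (by linarith) hX).congr_fun hfar.symm measurableSet_Ioi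
  have near : ∫ s in Ioc 0 X, f s = X ^ (γ - p) / γ := by
    rw [setIntegral_congr_fun measurableSet_Ioc hnear, integral_const_mul,
      ← intervalIntegral.integral_of_le hX.le, integral_rpow (Or.inl (by linarith)),
      sub_add_cancel, zero_rpow hγ.ne', sub_zero, mul_div_assoc', ← rpow_add hX, neg_add_eq_sub]
  have far : ∫ s in Ioi X, f s = X ^ (γ - p) / (p - γ) := by
    rw [setIntegral_congr_fun measurableSet_Ioi hfar, integral_Ioi_rpow_of_lt (by linarith) hX,
      show γ - 1 - p + 1 = γ - p by ring, neg_div, ← div_neg, neg_sub]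
  have hf : 0 ≤ᵐ[volume.restrict (Ioi 0)] f :=
    (ae_restrict_iff' measurableSet_Ioi).2 (ae_of_all _ fun s (hs : 0 < s) ↦ by positivity)
  have hint : IntegrableOn f (Ioi 0) := Ioc_union_Ioi_eq_Ioi hX.le ▸ int_near.union int_far
  rw [← ofReal_integral_eq_lintegral_ofReal hint hf, ← Ioc_union_Ioi_eq_Ioi hX.le,
    setIntegral_union Ioc_disjoint_Ioi_same measurableSet_Ioi int_near int_far, near, far]
  congr 1
  ring

/-- The heat-kernel profile at spatial scale `u = s^(1/α)`, with `r = |x - y|`, `w = |y|`. -/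
noncomputable def heatProfile (d α β r w u : ℝ) : ℝ :=
  u ^ (-d) * (u / (u + r)) ^ (d + α) * min 1 (w / u) ^ (β - d)

section HeatProfile

variable {d α β r w u ρ : ℝ}

lemma rpow_neg_mul_div_rpow {v : ℝ} (hu : 0 < u) (hv : 0 < v) :
    u ^ (-d) * (u / v) ^ d = v ^ (-d) := by
  rw [div_rpow hu.le hv.le, rpow_neg hu.le, rpow_neg hv.le]
  field_simp

lemma div_add_le_div_max (hu : 0 < u) (hr : 0 ≤ r) (hρu : ρ ≤ u + r) :
    u / (u + r) ≤ u / max ρ u :=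
  div_le_div_of_nonneg_left hu.le (lt_max_of_lt_right hu) (max_le hρu (le_add_of_nonneg_right hr))

lemma div_add_mul_min_one_div_le (hu : 0 < u) (hr : 0 ≤ r) (hw : 0 ≤ w) (hρ : 0 < ρ)
    (hρu : ρ ≤ u + r) : u / (u + r) * min 1 (w / u) ≤ min 1 (w / ρ) := by
  have hur : 0 < u + r := by positivity
  have ha1 : u / (u + r) ≤ 1 := (div_le_one hur).2 (by linarith)
  refine le_min (mul_le_one₀ ha1 (by positivity) (min_le_left _ _)) ?_
  calc u / (u + r) * min 1 (w / u) ≤ u / (u + r) * (w / u) := by gcongr; exact min_le_right _ _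
    _ = w / (u + r) := by field_simp
    _ ≤ w / ρ := by gcongr

lemma min_one_div_le_max_div_mul (hu : 0 < u) (hw : 0 ≤ w) (hρ : 0 < ρ) :
    min 1 (w / ρ) ≤ max ρ u / ρ * min 1 (w / u) := by
  rw [mul_min_of_nonneg _ _ (by positivity), mul_one]
  refine min_le_min ((one_le_div hρ).2 (le_max_left _ _)) ?_
  calc w / ρ = u / ρ * (w / u) := by field_simp
    _ ≤ max ρ u / ρ * (w / u) := by gcongr; exact le_max_right _ _

lemma heatProfile_le_of_le (hd : 0 ≤ d) (hdβ : d ≤ β) (hβ : β ≤ d + α) (hu : 0 < u) (hr : 0 ≤ r)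
    (hw : 0 ≤ w) (hρ : 0 < ρ) (hρu : ρ ≤ u + r) :
    heatProfile d α β r w u ≤ min 1 (w / ρ) ^ (β - d) * max ρ u ^ (-d) := by
  have ha : 0 < u / (u + r) := by positivity
  have hav : u / (u + r) ≤ u / max ρ u := div_add_le_div_max hu hr hρu
  have ha1 : u / (u + r) ≤ 1 := hav.trans ((div_le_one (by positivity)).2 (le_max_right _ _))
  have hsplit : heatProfile d α β r w u =
      u ^ (-d) * (u / (u + r)) ^ (2 * d + α - β) * (u / (u + r) * min 1 (w / u)) ^ (β - d) := by
    rw [heatProfile, mul_rpow ha.le (by positivity), show d + α = 2 * d + α - β + (β - d) by ring,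
      rpow_add ha]
    ring
  have hdecay : (u / (u + r)) ^ (2 * d + α - β) ≤ (u / (u + r)) ^ d :=
    rpow_le_rpow_of_exponent_ge ha ha1 (by linarith)
  have hweight : (u / (u + r) * min 1 (w / u)) ^ (β - d) ≤ min 1 (w / ρ) ^ (β - d) :=
    rpow_le_rpow (by positivity) (div_add_mul_min_one_div_le hu hr hw hρ hρu) (by linarith)
  calc heatProfile d α β r w u
      ≤ u ^ (-d) * (u / max ρ u) ^ d * min 1 (w / ρ) ^ (β - d) := by
        rw [hsplit]
        gcongr ?_ * ?_
        exact mul_le_mul_of_nonneg_left (hdecay.trans (by gcongr)) (by positivity)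
    _ = min 1 (w / ρ) ^ (β - d) * max ρ u ^ (-d) := by
        rw [rpow_neg_mul_div_rpow hu (by positivity), mul_comm]

lemma heatProfile_le_of_lt (hd : 0 ≤ d) (hα : 0 ≤ α) (hβd : β < d) (hu : 0 < u) (hr : 0 ≤ r)
    (hw : 0 < w) (hρ : 0 < ρ) (hρu : ρ ≤ u + r) :
    heatProfile d α β r w u ≤ min 1 (w / ρ) ^ (β - d) * ρ ^ (β - d) * max ρ u ^ (-β) := by
  have ha : 0 < u / (u + r) := by positivity
  have hv : 0 < max ρ u := lt_max_of_lt_left hρ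
  have hav : u / (u + r) ≤ u / max ρ u := div_add_le_div_max hu hr hρu
  have ha1 : u / (u + r) ≤ 1 := hav.trans ((div_le_one hv).2 (le_max_right _ _))
  have hdecay : (u / (u + r)) ^ (d + α) ≤ (u / max ρ u) ^ d :=
    (rpow_le_rpow_of_exponent_ge ha ha1 (le_add_of_nonneg_right hα)).trans (by gcongr)
  have hweight : min 1 (w / u) ^ (β - d) ≤
      (max ρ u / ρ) ^ (d - β) * min 1 (w / ρ) ^ (β - d) := by
    have := rpow_le_rpow_of_nonpos (lt_min one_pos (by positivity))
      (min_one_div_le_max_div_mul hu hw.le hρ) (by linarith : β - d ≤ 0)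
    rw [mul_rpow (by positivity) (by positivity)] at this
    rw [← neg_sub β d, rpow_neg (by positivity), inv_mul_eq_div, le_div_iff₀' (by positivity)]
    exact this
  calc heatProfile d α β r w u
      ≤ u ^ (-d) * (u / max ρ u) ^ d * ((max ρ u / ρ) ^ (d - β) * min 1 (w / ρ) ^ (β - d)) := by
        unfold heatProfile
        gcongr ?_ * ?_
        exact mul_le_mul_of_nonneg_left hdecay (by positivity)
    _ = min 1 (w / ρ) ^ (β - d) * ρ ^ (β - d) * max ρ u ^ (-β) := by
        rw [rpow_neg_mul_div_rpow hu hv, div_rpow hv.le hρ.le, show β - d = -(d - β) by ring,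
          show -β = -d + (d - β) by ring, rpow_add hv, rpow_neg hρ.le]
        ring

theorem heatProfile_le (hd : 0 ≤ d) (hα : 0 ≤ α) (hβ : β ≤ d + α) (hu : 0 < u) (hr : 0 ≤ r)
    (hw : 0 < w) (hρ : 0 < ρ) (hρu : ρ ≤ u + r) :
    heatProfile d α β r w u ≤
      min 1 (w / ρ) ^ (β - d) * ρ ^ (min β d - d) * max ρ u ^ (-min β d) := by
  rcases le_or_gt d β with hdβ | hβd
  · rw [min_eq_right hdβ, sub_self, rpow_zero, mul_one]
    exact heatProfile_le_of_le hd hdβ hβ hu hr hw.le hρ hρu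
  · rw [min_eq_left hβd.le]
    exact heatProfile_le_of_lt hd hα hβd hu hr hw hρ hρu

end HeatProfile

lemma max_rpow_one_div_rpow_neg_le {α m ρ s τ : ℝ} (hα : 0 < α) (hm : 0 ≤ m) (hρ : 0 < ρ)
    (hs : 0 < s) (hsτ : s ≤ τ) :
    max ρ (τ ^ (1 / α)) ^ (-m) ≤ max (ρ ^ α) s ^ (-(m / α)) := by
  have hmax : max ρ (τ ^ (1 / α)) = max (ρ ^ α) τ ^ (1 / α) := by
    rw [rpow_max (by positivity) (by linarith) (by positivity), one_div,
      rpow_rpow_inv hρ.le hα.ne']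
  rw [hmax, ← rpow_mul (by positivity), show 1 / α * -m = -(m / α) by ring]
  exact rpow_le_rpow_of_nonpos (by positivity) (max_le_max le_rfl hsτ)
    (neg_nonpos.2 (by positivity))

lemma heatProfile_rpow_one_div {d α β r w τ : ℝ} (hτ : 0 < τ) :
    τ ^ (-d / α) * (τ ^ (1 / α) / (τ ^ (1 / α) + r)) ^ (d + α) * min 1 (w / τ ^ (1 / α)) ^ (β - d) =
      heatProfile d α β r w (τ ^ (1 / α)) := by
  rw [heatProfile, ← rpow_mul hτ.le, show 1 / α * -d = -d / α by ring]

lemma rpow_mul_heatProfile_le {d α β γ r w t s ρ : ℝ} (hd : 0 ≤ d) (hα : 0 < α) (hβ0 : 0 ≤ β)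
    (hβ : β ≤ d + α) (ht : 0 < t) (hr : 0 ≤ r) (hw : 0 < w) (hs : 0 < s) (hρ : 0 < ρ)
    (hρt : ρ ≤ t ^ (1 / α) + r) :
    s ^ (γ - 1) * heatProfile d α β r w ((s + t) ^ (1 / α)) ≤
      min 1 (w / ρ) ^ (β - d) * ρ ^ (min β d - d) *
        (s ^ (γ - 1) * max (ρ ^ α) s ^ (-(min β d / α))) := by
  have hρu : ρ ≤ (s + t) ^ (1 / α) + r :=
    hρt.trans (add_le_add_left (rpow_le_rpow ht.le (by linarith) (by positivity)) r)
  calc s ^ (γ - 1) * heatProfile d α β r w ((s + t) ^ (1 / α))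
      ≤ s ^ (γ - 1) * (min 1 (w / ρ) ^ (β - d) * ρ ^ (min β d - d) *
          max ρ ((s + t) ^ (1 / α)) ^ (-min β d)) := by
        gcongr
        exact heatProfile_le hd hα.le hβ (by positivity) hr hw hρ hρu
    _ ≤ s ^ (γ - 1) * (min 1 (w / ρ) ^ (β - d) * ρ ^ (min β d - d) *
          max (ρ ^ α) s ^ (-(min β d / α))) := by
        gcongr
        exact max_rpow_one_div_rpow_neg_le hα (le_min hβ0 hd) hρ hs (by linarith)
    _ = _ := by ring

lemma rpow_neg_div_mul_rpow_one_div_div_rpow {t ρ α c : ℝ} (ht : 0 < t) (hρ : 0 < ρ) :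
    t ^ (-c / α) * (t ^ (1 / α) / ρ) ^ c = ρ ^ (-c) := by
  rw [div_rpow (by positivity) hρ.le, ← rpow_mul ht.le, mul_div_assoc', ← rpow_add ht,
    show -c / α + 1 / α * c = 0 by ring, rpow_zero, one_div, rpow_neg hρ.le]

theorem time_integral_riesz_heat_kappa_general
    (d : ℕ) (α β γ : ℝ)
    (hα1 : 1 < α)
    (hβ2 : β < (d : ℝ) + α)
    (hγ1 : 0 < γ) (hγ2 : γ < min β (d : ℝ) / α) :
    ∃ C : ℝ, 0 < C ∧
      ∀ t r w : ℝ, 0 < t → 0 ≤ r → 0 < w →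
        (∫⁻ s in Set.Ioi (0 : ℝ), ENNReal.ofReal
            (s ^ (γ - 1) * (s + t) ^ (-(d : ℝ) / α) *
              ((s + t) ^ (1 / α) / ((s + t) ^ (1 / α) + r)) ^ ((d : ℝ) + α) *
              min 1 (w / (s + t) ^ (1 / α)) ^ (β - d)))
          ≤ ENNReal.ofReal
              (C * t ^ (-((d : ℝ) - γ * α) / α) *
                (t ^ (1 / α) / (t ^ (1 / α) + r)) ^ ((d : ℝ) - α * γ) *
                min 1 (w / (t ^ (1 / α) + r)) ^ (β - d)) := by
  have hα : 0 < α := by linarith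
  set m := min β (d : ℝ)
  have hm : 0 ≤ m := ((div_pos_iff_of_pos_right hα).1 (hγ1.trans hγ2)).le
  refine ⟨1 / γ + 1 / (m / α - γ), add_pos (by positivity) (one_div_pos.2 (sub_pos.2 hγ2)), ?_⟩
  intro t r w ht hr hw
  set ρ := t ^ (1 / α) + r
  have hρ : 0 < ρ := by positivity
  set M := min 1 (w / ρ) ^ (β - d)
  have hexp : ρ ^ (m - d) * (ρ ^ α) ^ (γ - m / α) = ρ ^ (-((d : ℝ) - α * γ)) := by
    rw [← rpow_mul hρ.le, ← rpow_add hρ]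
    congr 1
    field_simp
    ring
  calc _ ≤ ∫⁻ s in Ioi 0, ENNReal.ofReal (M * ρ ^ (m - d)) *
          ENNReal.ofReal (s ^ (γ - 1) * max (ρ ^ α) s ^ (-(m / α))) := by
        refine setLIntegral_mono' measurableSet_Ioi fun s (hs : 0 < s) ↦ ?_
        rw [← ENNReal.ofReal_mul (by positivity)]
        refine ENNReal.ofReal_le_ofReal (le_of_eq_of_le ?_ (rpow_mul_heatProfile_le
          (Nat.cast_nonneg d) hα (hm.trans (min_le_left _ _)) hβ2.le ht hr hw hs hρ le_rfl))
        rw [← heatProfile_rpow_one_div (by positivity)]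
        ring
    _ = ENNReal.ofReal (M * ρ ^ (m - d) * ((ρ ^ α) ^ (γ - m / α) * (1 / γ + 1 / (m / α - γ)))) := by
        rw [lintegral_const_mul' _ _ ENNReal.ofReal_ne_top,
          lintegral_Ioi_rpow_mul_max_rpow_neg hγ1 hγ2 (by positivity),
          ← ENNReal.ofReal_mul (by positivity)]
    _ = _ := by
        rw [mul_comm γ α, mul_assoc _ (t ^ _), rpow_neg_div_mul_rpow_one_div_div_rpow ht hρ, ← hexp]
        ring_nf

/-- Time-integral estimate underlying the Riesz-heat kernel bound (2.16) of the paper: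
for `γ ∈ (0, min(β,d)/α)`,
`∫_0^∞ s^{γ−1} (s+t)^{−d/α} ((s+t)^{1/α}/((s+t)^{1/α}+r))^{d+α} min(1, w/(s+t)^{1/α})^{β−d} ds
≤ C t^{−(d−γα)/α} (t^{1/α}/(t^{1/α}+r))^{d−αγ} min(1, w/(t^{1/α}+r))^{β−d}`. -/
theorem time_integral_riesz_heat_kappa
    (d : ℕ) (hd : 1 ≤ d) (α β γ : ℝ)
    (hα1 : 1 < α) (hα2 : α < 2)
    (hβ1 : ((d : ℝ) + α) / 2 < β) (hβ2 : β < (d : ℝ) + α)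
    (hγ1 : 0 < γ) (hγ2 : γ < min β (d : ℝ) / α) :
    ∃ C : ℝ, 0 < C ∧
      ∀ t r w : ℝ, 0 < t → 0 ≤ r → 0 < w →
        (∫⁻ s in Set.Ioi (0 : ℝ), ENNReal.ofReal
            (s ^ (γ - 1) * (s + t) ^ (-(d : ℝ) / α) *
              ((s + t) ^ (1 / α) / ((s + t) ^ (1 / α) + r)) ^ ((d : ℝ) + α) *
              min 1 (w / (s + t) ^ (1 / α)) ^ (β - d)))
          ≤ ENNReal.ofReal
              (C * t ^ (-((d : ℝ) - γ * α) / α) *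
                (t ^ (1 / α) / (t ^ (1 / α) + r)) ^ ((d : ℝ) - α * γ) *
                min 1 (w / (t ^ (1 / α) + r)) ^ (β - d)) :=
  time_integral_riesz_heat_kappa_general d α β γ hα1 hβ2 hγ1 hγ2
end

section
/- Let d ≥ 1 be an integer, α ∈ (1,2], β ∈ ((d+α)/2, d+α), and γ > 0. Then there is a constant C, depending only on d, α, β, γ, such that for all τ > 0 and all x ∈ ℝ^d: ∫_{ℝ^d} min( 1, |z|/τ^{1/α} )^{β−d} · τ^{−d/α} · ( τ^{1/α} / ( τ^{1/α} + |x−z| ) )^{d+γ} · |z|^{1−α} dz ≤ C · τ^{(1−α)/α}. -/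
/-!
Substituting `z = τ^{1/α} w` turns the integral into `τ^{(1-α)/α}` times the same integral at
`τ = 1` with `x` replaced by `τ^{-1/α} x`, so it suffices to bound the latter uniformly in the
centre. Its integrand is at most `|w|^{β-d+1-α}` on the unit ball, which is integrable since
`β > (d+α)/2 ≥ α - 1`, and at most `(1 + |x - w|)^{-(d+γ)}` everywhere, whose integral does not
depend on `x` and is finite since `γ > 0`.
-/

open MeasureTheory Metric Module
open scoped ENNReal

section HaarMeasure

variable {E : Type*} [NormedAddCommGroup E] [NormedSpace ℝ E] [MeasurableSpace E] [BorelSpace E]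
  [FiniteDimensional ℝ E] (μ : Measure E) [μ.IsAddHaarMeasure]

theorem MeasureTheory.Measure.lintegral_comp_smul (f : E → ℝ≥0∞) {R : ℝ} (hR : R ≠ 0) :
    ∫⁻ x, f (R • x) ∂μ = ENNReal.ofReal |(R ^ finrank ℝ E)⁻¹| * ∫⁻ x, f x ∂μ := by
  rw [← smul_eq_mul, ← lintegral_smul_measure, ← map_addHaar_smul μ hR]
  exact (lintegral_map_equiv f
    (Homeomorph.smul (isUnit_iff_ne_zero.2 hR).unit).toMeasurableEquiv).symm

theorem lintegral_ball_rpow_lt_top (hE : 1 ≤ finrank ℝ E) {e : ℝ} (he : -(finrank ℝ E : ℝ) < e)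
    (r : ℝ) : ∫⁻ w in ball (0 : E) r, ENNReal.ofReal (‖w‖ ^ e) ∂μ < ∞ := by
  refine Integrable.lintegral_lt_top (integrableOn_ball_of_norm_le_rpow (C := 1) hE (α := -e)
    (by linarith) (Filter.Eventually.of_forall fun w => ?_)
    (measurable_norm.pow_const e).aestronglyMeasurable)
  rw [neg_neg, one_mul, Real.norm_of_nonneg (Real.rpow_nonneg (norm_nonneg w) e)]

end HaarMeasure

section WeightedKernel

variable {E : Type*} [NormedAddCommGroup E]

/-- With `t = τ^{1/α}`, `a = β - d`, `b = 1 - α` and `s = d + γ`, this is the integrand of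
`weighted_kernel_integral_bound` without its factor `τ^{-d/α}`. -/
noncomputable def weightedKernel (a b s t : ℝ) (x z : E) : ℝ :=
  min 1 (‖z‖ / t) ^ a * (t / (t + ‖x - z‖)) ^ s * ‖z‖ ^ b

theorem weightedKernel_one_le {a b s : ℝ} (hb : b < 0) (hs : 0 ≤ s) (y w : E) :
    weightedKernel a b s 1 y w ≤
      (ball (0 : E) 1).indicator (fun w => ‖w‖ ^ (a + b)) w + (1 + ‖y - w‖) ^ (-s) := by
  have hy : 0 < 1 + ‖y - w‖ := by positivity
  have hdecay : (1 / (1 + ‖y - w‖)) ^ s ≤ 1 :=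
    Real.rpow_le_one (by positivity) ((div_le_one hy).2 (by linarith [norm_nonneg (y - w)])) hs
  rcases lt_or_ge ‖w‖ 1 with hw1 | hw1
  · rw [Set.indicator_of_mem (mem_ball_zero_iff.2 hw1)]
    refine le_add_of_le_of_nonneg ?_ (by positivity)
    rcases eq_or_ne w 0 with rfl | hw0
    · simp [weightedKernel, Real.zero_rpow hb.ne, Real.rpow_nonneg]
    · have hw := norm_pos_iff.2 hw0
      rw [weightedKernel, div_one, min_eq_right hw1.le, Real.rpow_add hw]
      calc _ ≤ ‖w‖ ^ a * 1 * ‖w‖ ^ b := by gcongr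
        _ = _ := by ring
  · refine le_add_of_nonneg_of_le (Set.indicator_nonneg (fun _ _ => by positivity) w) ?_
    rw [weightedKernel, div_one, min_eq_left hw1, Real.one_rpow, one_mul, one_div,
      Real.inv_rpow hy.le, ← Real.rpow_neg hy.le]
    exact mul_le_of_le_one_right (by positivity) (Real.rpow_le_one_of_one_le_of_nonpos hw1 hb.le)

theorem weightedKernel_smul [NormedSpace ℝ E] (a b s : ℝ) {t : ℝ} (ht : 0 < t) (x w : E) :
    weightedKernel a b s t x (t • w) = t ^ b * weightedKernel a b s 1 (t⁻¹ • x) w := by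
  have hw : ‖t • w‖ = t * ‖w‖ := norm_smul_of_nonneg ht.le w
  have hxw : ‖x - t • w‖ = t * ‖t⁻¹ • x - w‖ := by
    rw [← norm_smul_of_nonneg ht.le, smul_sub, smul_inv_smul₀ ht.ne']
  have hfrac : t / (t + t * ‖t⁻¹ • x - w‖) = 1 / (1 + ‖t⁻¹ • x - w‖) := by
    rw [div_eq_div_iff (by positivity) (by positivity)]
    ring
  simp only [weightedKernel, hw, hxw, hfrac, mul_div_cancel_left₀ _ ht.ne', div_one,
    Real.mul_rpow ht.le (norm_nonneg w)]
  ring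

variable [MeasurableSpace E] [BorelSpace E] (μ : Measure E) [μ.IsAddHaarMeasure]

theorem lintegral_weightedKernel_one_le {a b s : ℝ} (hb : b < 0) (hs : 0 ≤ s) (y : E) :
    ∫⁻ w, ENNReal.ofReal (weightedKernel a b s 1 y w) ∂μ ≤
      (∫⁻ w in ball (0 : E) 1, ENNReal.ofReal (‖w‖ ^ (a + b)) ∂μ) +
        ∫⁻ w, ENNReal.ofReal ((1 + ‖w‖) ^ (-s)) ∂μ := by
  have hpt (w : E) : ENNReal.ofReal (weightedKernel a b s 1 y w) ≤
      (ball (0 : E) 1).indicator (fun w => ENNReal.ofReal (‖w‖ ^ (a + b))) w +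
        ENNReal.ofReal ((1 + ‖w - y‖) ^ (-s)) := by
    rw [← Function.comp_def ENNReal.ofReal, Set.indicator_comp_of_zero ENNReal.ofReal_zero,
      norm_sub_rev]
    exact (ENNReal.ofReal_le_ofReal (weightedKernel_one_le hb hs y w)).trans ENNReal.ofReal_add_le
  calc _ ≤ _ := lintegral_mono hpt
    _ = _ := by
      rw [lintegral_add_left ((by fun_prop : Measurable _).indicator measurableSet_ball),
        lintegral_indicator measurableSet_ball,
        lintegral_sub_right_eq_self (fun w => ENNReal.ofReal ((1 + ‖w‖) ^ (-s))) y]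

variable [NormedSpace ℝ E] [FiniteDimensional ℝ E]

theorem lintegral_weightedKernel_eq (a b s : ℝ) {t : ℝ} (ht : 0 < t) (x : E) :
    ∫⁻ z, ENNReal.ofReal (weightedKernel a b s t x z) ∂μ =
      ENNReal.ofReal (t ^ (finrank ℝ E + b)) *
        ∫⁻ w, ENNReal.ofReal (weightedKernel a b s 1 (t⁻¹ • x) w) ∂μ := by
  have htn : 0 < t ^ finrank ℝ E := pow_pos ht _
  have hscale := μ.lintegral_comp_smul (fun z => ENNReal.ofReal (weightedKernel a b s t x z))
    ht.ne'
  simp only [weightedKernel_smul a b s ht, ENNReal.ofReal_mul (Real.rpow_nonneg ht.le b)] at hscale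
  rw [lintegral_const_mul' _ _ ENNReal.ofReal_ne_top, abs_of_pos (inv_pos.2 htn)] at hscale
  rw [Real.rpow_add ht, Real.rpow_natCast, ENNReal.ofReal_mul htn.le, mul_assoc, hscale,
    ← mul_assoc, ← ENNReal.ofReal_mul htn.le, mul_inv_cancel₀ htn.ne', ENNReal.ofReal_one, one_mul]

theorem exists_lintegral_weightedKernel_le (hE : 1 ≤ finrank ℝ E) {a b s : ℝ}
    (hab : -(finrank ℝ E : ℝ) < a + b) (hb : b < 0) (hs : (finrank ℝ E : ℝ) < s) :
    ∃ C : ℝ, 0 < C ∧ ∀ t : ℝ, 0 < t → ∀ x : E,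
      ∫⁻ z, ENNReal.ofReal (weightedKernel a b s t x z) ∂μ ≤
        ENNReal.ofReal (C * t ^ (finrank ℝ E + b)) := by
  set M := (∫⁻ w in ball (0 : E) 1, ENNReal.ofReal (‖w‖ ^ (a + b)) ∂μ) +
    ∫⁻ w, ENNReal.ofReal ((1 + ‖w‖) ^ (-s)) ∂μ
  have hM : M ≠ ∞ := (ENNReal.add_lt_top.2
    ⟨lintegral_ball_rpow_lt_top μ hE hab 1, finite_integral_one_add_norm hs⟩).ne
  have hs0 : 0 ≤ s := (Nat.cast_nonneg _).trans hs.le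
  refine ⟨M.toReal + 1, by positivity, fun t ht x => ?_⟩
  calc _ = ENNReal.ofReal (t ^ (finrank ℝ E + b)) *
        ∫⁻ w, ENNReal.ofReal (weightedKernel a b s 1 (t⁻¹ • x) w) ∂μ :=
      lintegral_weightedKernel_eq μ a b s ht x
    _ ≤ ENNReal.ofReal (t ^ (finrank ℝ E + b)) * ENNReal.ofReal (M.toReal + 1) := by
      gcongr
      calc _ ≤ M := lintegral_weightedKernel_one_le μ hb hs0 _
        _ ≤ _ := (ENNReal.le_ofReal_iff_toReal_le hM (by positivity)).2 (by linarith)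
    _ = _ := by rw [← ENNReal.ofReal_mul (by positivity), mul_comm]

end WeightedKernel

theorem weighted_kernel_integral_bound_general
    (d : ℕ) (hd : 1 ≤ d) (α β γ : ℝ)
    (hα1 : 1 < α) (hα2 : α ≤ 2)
    (hβ1 : ((d : ℝ) + α) / 2 < β)
    (hγ : 0 < γ) :
    ∃ C : ℝ, 0 < C ∧
      ∀ τ : ℝ, 0 < τ → ∀ x : EuclideanSpace ℝ (Fin d),
        (∫⁻ z, ENNReal.ofReal
            (min 1 (‖z‖ / τ ^ (1 / α)) ^ (β - d) * τ ^ (-(d : ℝ) / α) *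
              (τ ^ (1 / α) / (τ ^ (1 / α) + ‖x - z‖)) ^ ((d : ℝ) + γ) *
              ‖z‖ ^ (1 - α)))
          ≤ ENNReal.ofReal (C * τ ^ ((1 - α) / α)) := by
  have hd' : (1 : ℝ) ≤ d := by exact_mod_cast hd
  obtain ⟨C, hC, hbound⟩ := exists_lintegral_weightedKernel_le
    (volume : Measure (EuclideanSpace ℝ (Fin d))) (a := β - d) (b := 1 - α) (s := d + γ)
    (by simpa using hd) (by simp only [finrank_euclideanSpace_fin]; linarith) (by linarith)
    (by simp only [finrank_euclideanSpace_fin]; linarith)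
  refine ⟨C, hC, fun τ hτ x => ?_⟩
  have hpow (c : ℝ) : τ ^ (c / α) = (τ ^ (1 / α)) ^ c := by
    rw [← Real.rpow_mul hτ.le, one_div_mul_eq_div]
  have ht : 0 < τ ^ (1 / α) := Real.rpow_pos_of_pos hτ _
  calc _ = ∫⁻ z, ENNReal.ofReal ((τ ^ (1 / α)) ^ (-(d : ℝ))) *
        ENNReal.ofReal (weightedKernel (β - d) (1 - α) (d + γ) (τ ^ (1 / α)) x z) := by
        refine lintegral_congr fun z => ?_
        rw [← ENNReal.ofReal_mul (by positivity), weightedKernel, ← hpow]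
        ring_nf
    _ ≤ ENNReal.ofReal ((τ ^ (1 / α)) ^ (-(d : ℝ))) *
        ENNReal.ofReal (C * (τ ^ (1 / α)) ^ ((d : ℝ) + (1 - α))) := by
        rw [lintegral_const_mul' _ _ ENNReal.ofReal_ne_top]
        gcongr
        simpa using hbound _ ht x
    _ = _ := by
        rw [← ENNReal.ofReal_mul (by positivity), hpow (1 - α), mul_left_comm,
          ← Real.rpow_add ht]
        ring_nf

/-- Estimate (5.6) of the paper: for `γ > 0`,
`∫ min(1, |z|/τ^{1/α})^{β−d} τ^{−d/α} (τ^{1/α}/(τ^{1/α}+|x−z|))^{d+γ} |z|^{1−α} dz ≤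
C τ^{(1−α)/α}`, uniformly in `τ > 0` and `x ∈ ℝ^d`. -/
theorem weighted_kernel_integral_bound
    (d : ℕ) (hd : 1 ≤ d) (α β γ : ℝ)
    (hα1 : 1 < α) (hα2 : α ≤ 2)
    (hβ1 : ((d : ℝ) + α) / 2 < β) (hβ2 : β < (d : ℝ) + α)
    (hγ : 0 < γ) :
    ∃ C : ℝ, 0 < C ∧
      ∀ τ : ℝ, 0 < τ → ∀ x : EuclideanSpace ℝ (Fin d),
        (∫⁻ z, ENNReal.ofReal
            (min 1 (‖z‖ / τ ^ (1 / α)) ^ (β - d) * τ ^ (-(d : ℝ) / α) *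
              (τ ^ (1 / α) / (τ ^ (1 / α) + ‖x - z‖)) ^ ((d : ℝ) + γ) *
              ‖z‖ ^ (1 - α)))
          ≤ ENNReal.ofReal (C * τ ^ ((1 - α) / α)) :=
  weighted_kernel_integral_bound_general d hd α β γ hα1 hα2 hβ1 hγ
end
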